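/- arXiv:2401.08792 — 5 statements merged into one kernel-verified Lean document; each statement's English description precedes it below -/
import Mathlib

section
/- For a Banach lattice E, the identity operator on E is d-compact (equivalently, every disjoint bounded subset of E is relatively compact) if and only if E is finite dimensional. -/
open Filter Topology Bornology

noncomputable section

/-- A set in a Banach lattice is disjoint if its elements are pairwise disjoint. -/
def DisjointSet {E : Type*} [NormedAddCommGroup E] [Lattice E] [HasSolidNorm E]
    [IsOrderedAddMonoid E] (D : Set E) : Prop :=
  ∀ x ∈ D, ∀ y ∈ D, x ≠ y → |x| ⊓ |y| = 0

section Aux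

set_option linter.unusedSectionVars false

variable {E : Type*} [NormedAddCommGroup E] [Lattice E] [HasSolidNorm E] [IsOrderedAddMonoid E]
  [NormedSpace ℝ E]

/-- Subadditivity of the infimum against a fixed positive element. -/
lemma aux_inf_add_le (a b c : E) (ha : 0 ≤ a) (hb : 0 ≤ b) (hc : 0 ≤ c) :
    (a + b) ⊓ c ≤ a ⊓ c + b ⊓ c := by
  have h1 : a ⊓ c + b ⊓ c = ((a + b) ⊓ (a + c)) ⊓ ((c + b) ⊓ (c + c)) := by
    rw [inf_add, add_inf, add_inf]
  rw [h1]
  refine le_inf (le_inf inf_le_left ?_) (le_inf ?_ ?_)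
  · exact le_trans inf_le_right (le_add_of_nonneg_left ha)
  · exact le_trans inf_le_right (le_add_of_nonneg_right hb)
  · exact le_trans inf_le_right (le_add_of_nonneg_right hc)

lemma aux_disj_add {a b c : E} (ha : 0 ≤ a) (hb : 0 ≤ b) (hc : 0 ≤ c)
    (hac : a ⊓ c = 0) (hbc : b ⊓ c = 0) : (a + b) ⊓ c = 0 := by
  have h0 : (0:E) ≤ (a + b) ⊓ c := le_inf (by positivity) hc
  have := aux_inf_add_le a b c ha hb hc
  rw [hac, hbc, add_zero] at this
  exact le_antisymm this h0

lemma aux_disj_nsmul {a c : E} (ha : 0 ≤ a) (hc : 0 ≤ c) (hac : a ⊓ c = 0) :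
    ∀ n : ℕ, (n • a) ⊓ c = 0 := by
  intro n
  induction n with
  | zero => simpa using inf_eq_left.mpr hc
  | succ n ih =>
      rw [succ_nsmul]
      exact aux_disj_add (nsmul_nonneg ha n) ha hc ih hac

/-- In a lattice ordered group, `0 ≤ n • x` for `n > 0` implies `0 ≤ x`. -/
lemma aux_nonneg_of_nsmul {x : E} {n : ℕ} (hn : 0 < n) (h : 0 ≤ n • x) : 0 ≤ x := by
  have hd : x⁺ ⊓ x⁻ = 0 := posPart_inf_negPart_eq_zero x
  have hdn : (n • x⁺) ⊓ x⁻ = 0 :=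
    aux_disj_nsmul (posPart_nonneg x) (negPart_nonneg x) hd n
  have hxle : n • x⁻ ≤ n • x⁺ := by
    have h2 : 0 ≤ n • (x⁺ - x⁻) := by rw [posPart_sub_negPart]; exact h
    rw [nsmul_sub, sub_nonneg] at h2
    exact h2
  have hle : x⁻ ≤ n • x⁻ := by
    have := nsmul_le_nsmul_left (negPart_nonneg x) hn
    simpa using this
  have : x⁻ ≤ (n • x⁺) ⊓ x⁻ := le_inf (hle.trans hxle) le_rfl
  rw [hdn] at this
  have hneg : x⁻ = 0 := le_antisymm this (negPart_nonneg x)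
  have := posPart_sub_negPart x
  rw [hneg, sub_zero] at this
  rw [← this]
  exact posPart_nonneg x

/-- Nonnegative real scalars preserve positivity (proved from scratch since the
typeclass assumptions do not include an ordered module structure). -/
lemma aux_smul_nonneg {t : ℝ} (ht : 0 ≤ t) {a : E} (ha : 0 ≤ a) : 0 ≤ t • a := by
  -- first for rationals
  have hq : ∀ q : ℚ, 0 ≤ q → 0 ≤ (q : ℝ) • a := by
    intro q hq0
    have hden : 0 ≤ ((q.den : ℝ))⁻¹ • a := by
      have h1 : (q.den : ℕ) • (((q.den : ℝ))⁻¹ • a) = a := by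
        rw [← Nat.cast_smul_eq_nsmul ℝ, smul_smul]
        rw [mul_inv_cancel₀ (by exact_mod_cast q.den_pos.ne')]
        simp
      exact aux_nonneg_of_nsmul q.den_pos (by rw [h1]; exact ha)
    have hnum : (q : ℝ) • a = (q.num.toNat : ℕ) • (((q.den : ℝ))⁻¹ • a) := by
      rw [← Nat.cast_smul_eq_nsmul ℝ, smul_smul]
      congr 1
      have : (q.num.toNat : ℝ) = (q.num : ℝ) := by
        exact_mod_cast Int.toNat_of_nonneg (Rat.num_nonneg.mpr hq0)
      rw [this, Rat.cast_def, div_eq_mul_inv]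
    rw [hnum]
    exact nsmul_nonneg hden _
  -- then use density of the rationals and the closedness of the positive cone
  have hclosed : IsClosed {s : ℝ | 0 ≤ s • a} := by
    have : Continuous fun s : ℝ => s • a := by continuity
    exact isClosed_le continuous_const this
  have key : ∀ n : ℕ, ∃ q : ℚ, t < (q:ℝ) ∧ (q:ℝ) < t + 1/(n+1) :=
    fun n => exists_rat_btwn (lt_add_of_pos_right t (by positivity))
  choose q hq1 hq2 using key
  have htend : Tendsto (fun n : ℕ => (q n : ℝ)) atTop (𝓝 t) := by
    refine tendsto_of_tendsto_of_tendsto_of_le_of_le tendsto_const_nhds ?_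
      (fun n => (hq1 n).le) (fun n => (hq2 n).le)
    simpa using tendsto_const_nhds.add (tendsto_one_div_add_atTop_nhds_zero_nat (𝕜 := ℝ))
  have hsmul : Tendsto (fun n : ℕ => (q n : ℝ) • a) atTop (𝓝 (t • a)) :=
    htend.smul tendsto_const_nhds
  refine le_of_tendsto_of_tendsto' tendsto_const_nhds hsmul (fun n => hq _ ?_)
  exact_mod_cast (ht.trans_lt (hq1 n)).le

lemma aux_smul_le_smul {t : ℝ} (ht : 0 ≤ t) {a b : E} (hab : a ≤ b) : t • a ≤ t • b := by
  have := aux_smul_nonneg ht (sub_nonneg.mpr hab)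
  rwa [smul_sub, sub_nonneg] at this

lemma aux_disj_smul {a c : E} (ha : 0 ≤ a) (hc : 0 ≤ c) (hac : a ⊓ c = 0)
    {t : ℝ} (ht : 0 ≤ t) : (t • a) ⊓ c = 0 := by
  obtain ⟨n, hn⟩ := exists_nat_ge t
  have h1 : t • a ≤ (n : ℕ) • a := by
    rw [← Nat.cast_smul_eq_nsmul ℝ]
    have := aux_smul_nonneg (sub_nonneg.mpr hn) ha
    rw [sub_smul, sub_nonneg] at this
    exact this
  have h2 : (0:E) ≤ (t • a) ⊓ c := le_inf (aux_smul_nonneg ht ha) hc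
  have h3 : (t • a) ⊓ c ≤ ((n : ℕ) • a) ⊓ c := inf_le_inf_right c h1
  rw [aux_disj_nsmul ha hc hac n] at h3
  exact le_antisymm h3 h2

/-- Disjoint nonnegative elements `a b ≤ y` sum to at most `y`. -/
lemma aux_add_le_of_disj {a b y : E} (hab : a ⊓ b = 0)
    (hay : a ≤ y) (hby : b ≤ y) : a + b ≤ y := by
  have : a + b = a ⊓ b + (a ⊔ b) := (inf_add_sup a b).symm
  rw [this, hab, zero_add]
  exact sup_le hay hby

/-- For disjoint nonnegative elements, `|x - y| = x + y`. -/
lemma aux_abs_sub {x y : E} (hx : 0 ≤ x) (hy : 0 ≤ y) (hxy : x ⊓ y = 0) :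
    |x - y| = x + y := by
  have hsup : x ⊔ y = x + y := by
    have := inf_add_sup x y
    rw [hxy, zero_add] at this
    exact this
  have hpos : (x - y)⁺ = x := by
    rw [posPart_def]
    have : (x - y) ⊔ 0 = (x ⊔ y) - y := by
      rw [sup_sub, sub_self]
    rw [this, hsup]
    abel
  have hneg : (x - y)⁻ = y := by
    rw [negPart_def, neg_sub]
    have : (y - x) ⊔ 0 = (y ⊔ x) - x := by
      rw [sup_sub, sub_self]
    rw [this, sup_comm, hsup]
    abel
  rw [← posPart_add_negPart (x - y), hpos, hneg]

/-- Disjoint norm-one nonnegative elements are 1-separated. -/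
lemma aux_norm_sub {x y : E} (hx : 0 ≤ x) (hy : 0 ≤ y) (hxy : x ⊓ y = 0)
    (hnx : ‖x‖ = 1) : (1:ℝ) ≤ ‖x - y‖ := by
  have habs : |x - y| = x + y := aux_abs_sub hx hy hxy
  have : ‖x‖ ≤ ‖x - y‖ := by
    refine HasSolidNorm.solid ?_
    rw [abs_of_nonneg hx, habs]
    exact le_add_of_nonneg_right hy
  linarith

/-- An element all of whose components are comparable: any two disjoint elements
below it must have one equal to zero. -/
def Atomish (v : E) : Prop :=
  ∀ a b : E, 0 ≤ a → a ≤ v → 0 ≤ b → b ≤ v → a ⊓ b = 0 → a = 0 ∨ b = 0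

/-- Below an atomish element the order is total. -/
lemma Atomish.total {v : E} (hv : Atomish v) {d e : E} (hd0 : 0 ≤ d) (hdv : d ≤ v)
    (he0 : 0 ≤ e) (hev : e ≤ v) : d ≤ e ∨ e ≤ d := by
  have h1 : 0 ≤ (d - e)⁺ := posPart_nonneg _
  have h2 : (d - e)⁺ ≤ v := by
    rw [posPart_def]
    exact sup_le (le_trans (sub_le_self d he0) hdv) (hd0.trans hdv)
  have h3 : 0 ≤ (d - e)⁻ := negPart_nonneg _
  have h4 : (d - e)⁻ ≤ v := by
    rw [negPart_def, neg_sub]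
    exact sup_le (le_trans (sub_le_self e hd0) hev) (hd0.trans hdv)
  rcases hv _ _ h1 h2 h3 h4 (posPart_inf_negPart_eq_zero _) with h | h
  · left
    have : d - e ≤ 0 := posPart_eq_zero.mp h
    exact sub_nonpos.mp this
  · right
    have : 0 ≤ d - e := negPart_eq_zero.mp h
    exact sub_nonneg.mp this

/-- Everything below a nonzero atomish element is a scalar multiple of it. -/
lemma Atomish.scalar {v : E} (hv : Atomish v) (hv0 : 0 ≤ v) (hvne : v ≠ 0) {d : E}
    (hd0 : 0 ≤ d) (hdv : d ≤ v) : ∃ t : ℝ, 0 ≤ t ∧ t ≤ 1 ∧ d = t • v := by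
  set S : Set ℝ := {t | 0 ≤ t ∧ t • v ≤ d} with hSdef
  have h0S : (0:ℝ) ∈ S := ⟨le_rfl, by simpa using hd0⟩
  have hbdd : ∀ t ∈ S, t ≤ 1 := by
    rintro t ⟨ht0, htv⟩
    by_contra hcon
    push_neg at hcon
    have h1 : v ≤ t • v := by
      have h2 := aux_smul_nonneg (sub_nonneg.mpr hcon.le) hv0
      rwa [sub_smul, one_smul, sub_nonneg] at h2
    have heq : t • v = v := le_antisymm (htv.trans hdv) h1
    refine hvne ?_
    have h3 : (t - 1) • v = 0 := by rw [sub_smul, one_smul, heq, sub_self]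
    have h4 := congrArg (fun z : E => (t-1)⁻¹ • z) h3
    simpa [smul_smul, inv_mul_cancel₀ (by linarith : t - 1 ≠ 0)] using h4
  have hbddAbove : BddAbove S := ⟨1, fun t ht => hbdd t ht⟩
  set T := sSup S with hTdef
  have hT0 : 0 ≤ T := le_csSup hbddAbove h0S
  have hT1 : T ≤ 1 := csSup_le ⟨0, h0S⟩ hbdd
  have hTv : T • v ≤ d := by
    obtain ⟨u, -, htend, huS⟩ := exists_seq_tendsto_sSup ⟨0, h0S⟩ hbddAbove
    have h5 : Tendsto (fun n => u n • v) atTop (𝓝 (T • v)) := htend.smul tendsto_const_nhds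
    exact le_of_tendsto_of_tendsto' h5 tendsto_const_nhds (fun n => (huS n).2)
  set r := d - T • v with hrdef
  have hr0 : 0 ≤ r := sub_nonneg.mpr hTv
  have hrv : r ≤ v := by
    have : r ≤ d := by
      rw [hrdef]
      exact sub_le_self d (aux_smul_nonneg hT0 hv0)
    exact this.trans hdv
  have hrsmall : ∀ n : ℕ, r ≤ (1/(n+1) : ℝ) • v := by
    intro n
    set ε : ℝ := 1/(n+1) with hεdef
    have hε0 : 0 < ε := by positivity
    have hε1 : ε ≤ 1 := by
      rw [hεdef]
      rw [div_le_one (by positivity)]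
      linarith [Nat.cast_nonneg (α := ℝ) n]
    have hεv0 : 0 ≤ ε • v := aux_smul_nonneg hε0.le hv0
    have hεvv : ε • v ≤ v := by
      have h2 := aux_smul_nonneg (sub_nonneg.mpr hε1) hv0
      rwa [sub_smul, one_smul, sub_nonneg] at h2
    rcases hv.total hr0 hrv hεv0 hεvv with h | h
    · exact h
    · exfalso
      have h6 : (T + ε) • v ≤ d := by
        rw [add_smul]
        have h7 : T • v + ε • v ≤ T • v + r := add_le_add_right h _
        rw [hrdef] at h7
        simpa using h7
      have h8 : T + ε ∈ S := ⟨by positivity, h6⟩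
      have := le_csSup hbddAbove h8
      rw [← hTdef] at this
      linarith
  have hrz : r = 0 := by
    have hnorm : ∀ n : ℕ, ‖r‖ ≤ (1/(n+1) : ℝ) * ‖v‖ := by
      intro n
      have h9 : |r| ≤ |(1/(n+1) : ℝ) • v| := by
        rw [abs_of_nonneg hr0, abs_of_nonneg (aux_smul_nonneg (by positivity) hv0)]
        exact hrsmall n
      calc ‖r‖ ≤ ‖(1/(n+1) : ℝ) • v‖ := HasSolidNorm.solid h9
        _ = (1/(n+1) : ℝ) * ‖v‖ := by
            rw [norm_smul, Real.norm_eq_abs, abs_of_pos (by positivity)]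
    have htends : Tendsto (fun n : ℕ => (1/(n+1) : ℝ) * ‖v‖) atTop (𝓝 0) := by
      simpa using tendsto_one_div_add_atTop_nhds_zero_nat.mul_const ‖v‖
    have : ‖r‖ ≤ 0 := le_of_tendsto_of_tendsto' tendsto_const_nhds htends hnorm
    simpa [norm_le_zero_iff] using this
  refine ⟨T, hT0, hT1, ?_⟩
  rw [hrdef, sub_eq_zero] at hrz
  exact hrz

/-- A 1-separated set with compact closure is finite. -/
lemma aux_finite_of_sep {D : Set E} (hc : IsCompact (closure D))
    (hsep : ∀ x ∈ D, ∀ y ∈ D, x ≠ y → (1:ℝ) ≤ ‖x - y‖) : D.Finite := by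
  have htb : TotallyBounded D := hc.totallyBounded.subset subset_closure
  obtain ⟨t, htfin, hcover⟩ := Metric.totallyBounded_iff.mp htb (1/2) (by norm_num)
  have hsub : D ⊆ ⋃ y ∈ t, D ∩ Metric.ball y (1/2) := by
    intro x hx
    obtain ⟨y, hy, hxy⟩ := Set.mem_iUnion₂.mp (hcover hx)
    exact Set.mem_iUnion₂.mpr ⟨y, hy, hx, hxy⟩
  refine Set.Finite.subset (Set.Finite.biUnion htfin fun y _ => ?_) hsub
  refine Set.Subsingleton.finite ?_
  intro x1 hx1 x2 hx2
  by_contra hne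
  have h1 : dist x1 x2 < 1 := by
    calc dist x1 x2 ≤ dist x1 y + dist y x2 := dist_triangle _ _ _
      _ < 1/2 + 1/2 := by
          have := Metric.mem_ball.mp hx1.2
          have := Metric.mem_ball.mp hx2.2
          rw [dist_comm y x2] at *
          linarith [Metric.mem_ball.mp hx1.2, Metric.mem_ball.mp hx2.2]
      _ = 1 := by norm_num
  have h2 := hsep x1 hx1.1 x2 hx2.1 hne
  rw [dist_eq_norm] at h1
  linarith

/-- Under the d-compactness hypothesis, every pairwise disjoint set of nonnegative
norm-one elements is finite. -/
lemma aux_finite_of_disjoint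
    (H : ∀ D : Set E, DisjointSet D → IsBounded D → IsCompact (closure D))
    {D : Set E} (hpos : ∀ x ∈ D, 0 ≤ x) (hnorm : ∀ x ∈ D, ‖x‖ = 1)
    (hdisj : ∀ x ∈ D, ∀ y ∈ D, x ≠ y → x ⊓ y = 0) : D.Finite := by
  have hds : DisjointSet D := by
    intro x hx y hy hxy
    rw [abs_of_nonneg (hpos x hx), abs_of_nonneg (hpos y hy)]
    exact hdisj x hx y hy hxy
  have hbdd : IsBounded D :=
    isBounded_iff_forall_norm_le.mpr ⟨1, fun x hx => (hnorm x hx).le⟩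
  exact aux_finite_of_sep (H D hds hbdd)
    (fun x hx y hy hxy =>
      aux_norm_sub (hpos x hx) (hpos y hy) (hdisj x hx y hy hxy) (hnorm x hx))

/-- Normalization of a nonzero element. -/
lemma aux_normalize {v : E} (hv0 : 0 ≤ v) (hvne : v ≠ 0) :
    0 ≤ ‖v‖⁻¹ • v ∧ ‖(‖v‖⁻¹ • v)‖ = 1 ∧ ‖v‖ • (‖v‖⁻¹ • v) = v := by
  have hn : ‖v‖ ≠ 0 := norm_ne_zero_iff.mpr hvne
  refine ⟨aux_smul_nonneg (by positivity) hv0, ?_, ?_⟩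
  · rw [norm_smul, norm_inv, norm_norm, inv_mul_cancel₀ hn]
  · rw [smul_smul, mul_inv_cancel₀ hn, one_smul]

/-- Under the d-compactness hypothesis, every nonzero positive element dominates a
nonzero atomish element. -/
lemma aux_exists_atomish
    (H : ∀ D : Set E, DisjointSet D → IsBounded D → IsCompact (closure D))
    (u : E) (hu0 : 0 ≤ u) (hune : u ≠ 0) :
    ∃ v : E, 0 ≤ v ∧ v ≠ 0 ∧ v ≤ u ∧ Atomish v := by
  by_contra hcon
  push_neg at hcon
  -- every nonzero positive element below `u` can be split into two disjoint pieces
  have hsplit : ∀ v : E, 0 ≤ v → v ≠ 0 → v ≤ u →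
      ∃ p : E × E, (0 ≤ p.1 ∧ p.1 ≠ 0 ∧ p.1 ≤ v) ∧
        (0 ≤ p.2 ∧ p.2 ≠ 0 ∧ p.2 ≤ v) ∧ p.1 ⊓ p.2 = 0 := by
    intro v hv0 hvne hvu
    have hna : ¬ Atomish v := hcon v hv0 hvne hvu
    rw [Atomish] at hna
    push_neg at hna
    obtain ⟨a, b, ha0, hav, hb0, hbv, hab, hane, hbne⟩ := hna
    exact ⟨(a, b), ⟨ha0, hane, hav⟩, ⟨hb0, hbne, hbv⟩, hab⟩
  -- build an infinite disjoint sequence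
  let T := {v : E // 0 ≤ v ∧ v ≠ 0 ∧ v ≤ u}
  have hstep : ∀ v : T, ∃ p : E × T, (0 ≤ p.1 ∧ p.1 ≠ 0 ∧ p.1 ≤ v.1) ∧
      (p.2).1 ≤ v.1 ∧ p.1 ⊓ (p.2).1 = 0 := by
    rintro ⟨v, hv0, hvne, hvu⟩
    obtain ⟨p, ⟨h10, h1ne, h1v⟩, ⟨h20, h2ne, h2v⟩, hd⟩ := hsplit v hv0 hvne hvu
    exact ⟨(p.1, ⟨p.2, h20, h2ne, h2v.trans hvu⟩), ⟨h10, h1ne, h1v⟩, h2v, hd⟩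
  choose F hF using hstep
  let g : ℕ → T := fun n => Nat.rec (⟨u, hu0, hune, le_rfl⟩ : T) (fun _ prev => (F prev).2) n
  have hgsucc : ∀ n : ℕ, g (n+1) = (F (g n)).2 := fun n => rfl
  let d : ℕ → E := fun n => (F (g n)).1
  have hd0 : ∀ n, 0 ≤ d n := fun n => (hF (g n)).1.1
  have hdne : ∀ n, d n ≠ 0 := fun n => (hF (g n)).1.2.1
  have hdg : ∀ n, d n ≤ (g n).1 := fun n => (hF (g n)).1.2.2
  have hdisj0 : ∀ n, d n ⊓ (g (n+1)).1 = 0 := fun n => (hF (g n)).2.2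
  have hgmono : ∀ n m : ℕ, n ≤ m → (g m).1 ≤ (g n).1 := by
    intro n m hnm
    induction m with
    | zero => simp_all
    | succ m ih =>
        rcases Nat.lt_or_ge n (m+1) with h | h
        · have h2 : (g (m+1)).1 ≤ (g m).1 := by
            rw [hgsucc m]
            exact (hF (g m)).2.1
          exact h2.trans (ih (Nat.lt_succ_iff.mp h))
        · have : n = m + 1 := le_antisymm hnm h
          rw [this]
  have hdd : ∀ n m : ℕ, n < m → d n ⊓ d m = 0 := by
    intro n m hnm
    have h1 : d m ≤ (g (n+1)).1 := (hdg m).trans (hgmono (n+1) m hnm)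
    have h2 : d n ⊓ d m ≤ d n ⊓ (g (n+1)).1 := inf_le_inf_left _ h1
    rw [hdisj0 n] at h2
    exact le_antisymm h2 (le_inf (hd0 n) (hd0 m))
  -- normalize
  let e : ℕ → E := fun n => ‖d n‖⁻¹ • d n
  have he0 : ∀ n, 0 ≤ e n := fun n => (aux_normalize (hd0 n) (hdne n)).1
  have he1 : ∀ n, ‖e n‖ = 1 := fun n => (aux_normalize (hd0 n) (hdne n)).2.1
  have hedisj : ∀ n m : ℕ, n ≠ m → e n ⊓ e m = 0 := by
    have key : ∀ n m : ℕ, n < m → e n ⊓ e m = 0 := by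
      intro n m hnm
      have h1 : (‖d n‖⁻¹ • d n) ⊓ d m = 0 :=
        aux_disj_smul (hd0 n) (hd0 m) (hdd n m hnm) (by positivity)
      have h2 : (‖d m‖⁻¹ • d m) ⊓ (‖d n‖⁻¹ • d n) = 0 :=
        aux_disj_smul (hd0 m) (aux_smul_nonneg (by positivity) (hd0 n))
          (by rw [inf_comm]; exact h1) (by positivity)
      rw [inf_comm] at h2
      exact h2
    intro n m hnm
    rcases Nat.lt_or_ge n m with h | h
    · exact key n m h
    · rw [inf_comm]; exact key m n (lt_of_le_of_ne h (Ne.symm hnm))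
  have heinj : Function.Injective e := by
    intro n m hnm
    by_contra hne
    have := hedisj n m hne
    rw [hnm, inf_idem] at this
    have := congrArg norm this
    rw [he1 m, norm_zero] at this
    norm_num at this
  have hfin : (Set.range e).Finite := by
    refine aux_finite_of_disjoint H ?_ ?_ ?_
    · rintro x ⟨n, rfl⟩; exact he0 n
    · rintro x ⟨n, rfl⟩; exact he1 n
    · rintro x ⟨n, rfl⟩ y ⟨m, rfl⟩ hxy
      exact hedisj n m (fun h => hxy (by rw [h]))
  exact (Set.infinite_range_of_injective heinj) hfin

lemma aux_sum_disj {s : Finset E} {f : E → E} {c : E} (hc : 0 ≤ c)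
    (h0 : ∀ x ∈ s, 0 ≤ f x) (hd : ∀ x ∈ s, f x ⊓ c = 0) :
    (∑ x ∈ s, f x) ⊓ c = 0 := by
  classical
  induction s using Finset.induction with
  | empty => simpa using inf_eq_left.mpr hc
  | @insert a s' hx ih =>
      rw [Finset.sum_insert hx]
      refine aux_disj_add (h0 a (Finset.mem_insert_self a s'))
        (Finset.sum_nonneg fun x hxs => h0 x (Finset.mem_insert_of_mem hxs)) hc
        (hd a (Finset.mem_insert_self a s')) ?_
      exact ih (fun x hxs => h0 x (Finset.mem_insert_of_mem hxs))
        (fun x hxs => hd x (Finset.mem_insert_of_mem hxs))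

lemma aux_sum_le {s : Finset E} {f : E → E} {y : E} (hy : 0 ≤ y)
    (h0 : ∀ x ∈ s, 0 ≤ f x) (hle : ∀ x ∈ s, f x ≤ y)
    (hdisj : ∀ x ∈ s, ∀ z ∈ s, x ≠ z → f x ⊓ f z = 0) :
    ∑ x ∈ s, f x ≤ y := by
  classical
  induction s using Finset.induction with
  | empty => simpa using hy
  | @insert a s' hans' ih =>
      rw [Finset.sum_insert hans']
      refine aux_add_le_of_disj ?_ (hle a (Finset.mem_insert_self a s')) ?_
      · rw [inf_comm]
        refine aux_sum_disj (h0 a (Finset.mem_insert_self a s'))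
          (fun x hxs => h0 x (Finset.mem_insert_of_mem hxs)) ?_
        intro x hxs
        refine hdisj x (Finset.mem_insert_of_mem hxs) a (Finset.mem_insert_self a s') ?_
        rintro rfl
        exact hans' hxs
      · exact ih (fun x hxs => h0 x (Finset.mem_insert_of_mem hxs))
          (fun x hxs => hle x (Finset.mem_insert_of_mem hxs))
          (fun x hxs z hzs => hdisj x (Finset.mem_insert_of_mem hxs) z
            (Finset.mem_insert_of_mem hzs))

lemma aux_csSup_smul_le {x y : E} {S : Set ℝ} (hS : S = {t : ℝ | 0 ≤ t ∧ t • x ≤ y})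
    (hne : S.Nonempty) (hbdd : BddAbove S) : sSup S • x ≤ y := by
  obtain ⟨u, -, htend, huS⟩ := exists_seq_tendsto_sSup hne hbdd
  have h5 : Tendsto (fun n => u n • x) atTop (𝓝 (sSup S • x)) :=
    htend.smul tendsto_const_nhds
  refine le_of_tendsto_of_tendsto' h5 tendsto_const_nhds (fun n => ?_)
  have := huS n
  rw [hS] at this
  exact this.2

end Aux

/-- For a Banach lattice `E`, the identity is d-compact (every disjoint bounded subset is
relatively compact) iff `E` is finite dimensional. -/
theorem identity_dCompact_iff_finiteDimensional {E : Type*}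
    [NormedAddCommGroup E] [Lattice E] [HasSolidNorm E] [IsOrderedAddMonoid E] [NormedSpace ℝ E] [CompleteSpace E] :
    (∀ D : Set E, DisjointSet D → IsBounded D → IsCompact (closure D)) ↔
      FiniteDimensional ℝ E := by
  constructor
  · -- hard direction
    intro H
    classical
    set 𝒜 : Set (Set E) := {D | (∀ x ∈ D, 0 ≤ x ∧ ‖x‖ = 1 ∧ Atomish x) ∧
        ∀ x ∈ D, ∀ y ∈ D, x ≠ y → x ⊓ y = 0} with h𝒜
    have hzorn : ∃ M, Maximal (· ∈ 𝒜) M := by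
      refine zorn_subset 𝒜 ?_
      intro c hc hchain
      refine ⟨⋃₀ c, ⟨?_, ?_⟩, fun s hs => Set.subset_sUnion_of_mem hs⟩
      · rintro x ⟨s, hs, hx⟩
        exact (hc hs).1 x hx
      · rintro x ⟨s, hs, hx⟩ y ⟨s2, hs2, hy⟩ hxy
        rcases hchain.total hs hs2 with h | h
        · exact (hc hs2).2 x (h hx) y hy hxy
        · exact (hc hs).2 x hx y (h hy) hxy
    obtain ⟨M, hM⟩ := hzorn
    have hMgood : M ∈ 𝒜 := hM.prop
    have hMfin : M.Finite := aux_finite_of_disjoint H (fun x hx => (hMgood.1 x hx).1)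
        (fun x hx => (hMgood.1 x hx).2.1) hMgood.2
    have hMne : ∀ x ∈ M, x ≠ (0:E) := by
      intro x hx h
      have := (hMgood.1 x hx).2.1
      rw [h, norm_zero] at this
      norm_num at this
    set Mf := hMfin.toFinset with hMf
    have hMfmem : ∀ x : E, x ∈ Mf ↔ x ∈ M := fun x => hMfin.mem_toFinset
    have hspan : ∀ y : E, 0 ≤ y → y ∈ Submodule.span ℝ M := by
      intro y hy
      set T : E → ℝ := fun x => sSup {t : ℝ | 0 ≤ t ∧ t • x ≤ y} with hT
      have hxprops : ∀ x ∈ M, 0 ≤ T x ∧ T x • x ≤ y ∧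
          ∀ s : ℝ, 0 ≤ s → s • x ≤ y → s ≤ T x := by
        intro x hxM
        obtain ⟨hx0, hx1, -⟩ := hMgood.1 x hxM
        set S := {t : ℝ | 0 ≤ t ∧ t • x ≤ y} with hS
        have h0S : (0:ℝ) ∈ S := ⟨le_rfl, by simpa using hy⟩
        have hbddS : BddAbove S := by
          refine ⟨‖y‖, fun t ht => ?_⟩
          obtain ⟨ht0, htle⟩ := ht
          have h2 : |t • x| ≤ |y| := by
            rw [abs_of_nonneg (aux_smul_nonneg ht0 hx0), abs_of_nonneg hy]
            exact htle
          have h3 := HasSolidNorm.solid h2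
          rw [norm_smul, Real.norm_eq_abs, abs_of_nonneg ht0, hx1, mul_one] at h3
          exact h3
        exact ⟨le_csSup hbddS h0S, aux_csSup_smul_le hS ⟨0, h0S⟩ hbddS,
          fun s hs1 hs2 => le_csSup hbddS ⟨hs1, hs2⟩⟩
      have hsmuldisj : ∀ x ∈ M, ∀ z ∈ M, x ≠ z → (T x • x) ⊓ (T z • z) = 0 := by
        intro x hx z hz hxz
        have hx0 := (hMgood.1 x hx).1
        have hz0 := (hMgood.1 z hz).1
        have hTx0 := (hxprops x hx).1
        have hTz0 := (hxprops z hz).1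
        have h1 : (T x • x) ⊓ z = 0 :=
          aux_disj_smul hx0 hz0 (hMgood.2 x hx z hz hxz) hTx0
        have h2 : (T z • z) ⊓ (T x • x) = 0 :=
          aux_disj_smul hz0 (aux_smul_nonneg hTx0 hx0) (by rw [inf_comm]; exact h1) hTz0
        rw [inf_comm] at h2
        exact h2
      set u : E := ∑ x ∈ Mf, T x • x with hu
      have husum_le : u ≤ y := by
        refine aux_sum_le hy ?_ ?_ ?_
        · intro x hx
          exact aux_smul_nonneg (hxprops x ((hMfmem x).mp hx)).1
            (hMgood.1 x ((hMfmem x).mp hx)).1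
        · intro x hx
          exact (hxprops x ((hMfmem x).mp hx)).2.1
        · intro x hx z hz hxz
          exact hsmuldisj x ((hMfmem x).mp hx) z ((hMfmem z).mp hz) hxz
      have hw0 : 0 ≤ y - u := sub_nonneg.mpr husum_le
      have hu0 : 0 ≤ u := Finset.sum_nonneg fun x hx =>
        aux_smul_nonneg (hxprops x ((hMfmem x).mp hx)).1 (hMgood.1 x ((hMfmem x).mp hx)).1
      have hwdisj : ∀ x ∈ M, (y - u) ⊓ x = 0 := by
        intro x hxM
        obtain ⟨hx0, hx1, hxa⟩ := hMgood.1 x hxM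
        obtain ⟨hT0, hTle, hTub⟩ := hxprops x hxM
        have hdx0 : 0 ≤ (y - u) ⊓ x := le_inf hw0 hx0
        obtain ⟨t, ht0, ht1, hdt⟩ := hxa.scalar hx0 (hMne x hxM) hdx0 inf_le_right
        rcases eq_or_lt_of_le ht0 with h | h
        · rw [hdt, ← h, zero_smul]
        · exfalso
          have h1 : t • x ≤ y - u := hdt ▸ inf_le_left
          have h2 : T x • x ≤ u := by
            refine Finset.single_le_sum (f := fun z => T z • z) ?_ ((hMfmem x).mpr hxM)
            intro z hz
            exact aux_smul_nonneg (hxprops z ((hMfmem z).mp hz)).1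
              (hMgood.1 z ((hMfmem z).mp hz)).1
          have h3 : (T x + t) • x ≤ y := by
            rw [add_smul]
            calc T x • x + t • x ≤ u + (y - u) := add_le_add h2 h1
              _ = y := by abel
          have h4 := hTub (T x + t) (by positivity) h3
          linarith
      have hweq : y - u = 0 := by
        by_contra hne
        obtain ⟨v, hv0, hvne, hvw, hva⟩ := aux_exists_atomish H (y - u) hw0 hne
        obtain ⟨he0, he1, hev⟩ := aux_normalize hv0 hvne
        set e : E := ‖v‖⁻¹ • v with he
        have hvnorm : ‖v‖ ≠ 0 := norm_ne_zero_iff.mpr hvne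
        have hea : Atomish e := by
          intro a b ha0 hae hb0 hbe hab
          have h1 : ‖v‖ • a ≤ v := by
            have := aux_smul_le_smul (norm_nonneg v) hae
            rwa [hev] at this
          have h2 : ‖v‖ • b ≤ v := by
            have := aux_smul_le_smul (norm_nonneg v) hbe
            rwa [hev] at this
          have h3 : (‖v‖ • a) ⊓ b = 0 := aux_disj_smul ha0 hb0 hab (norm_nonneg v)
          have h4 : (‖v‖ • b) ⊓ (‖v‖ • a) = 0 :=
            aux_disj_smul hb0 (aux_smul_nonneg (norm_nonneg v) ha0)
              (by rw [inf_comm]; exact h3) (norm_nonneg v)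
          rw [inf_comm] at h4
          rcases hva (‖v‖ • a) (‖v‖ • b) (aux_smul_nonneg (norm_nonneg v) ha0) h1
            (aux_smul_nonneg (norm_nonneg v) hb0) h2 h4 with h | h
          · left
            rcases smul_eq_zero.mp h with h' | h'
            · exact absurd h' hvnorm
            · exact h'
          · right
            rcases smul_eq_zero.mp h with h' | h'
            · exact absurd h' hvnorm
            · exact h'
        have hedisjM : ∀ x ∈ M, e ⊓ x = 0 := by
          intro x hxM
          have hx0 := (hMgood.1 x hxM).1
          have h1 : v ⊓ x = 0 := by
            have h2 : v ⊓ x ≤ (y - u) ⊓ x := inf_le_inf_right x hvw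
            rw [hwdisj x hxM] at h2
            exact le_antisymm h2 (le_inf hv0 hx0)
          exact aux_disj_smul hv0 hx0 h1 (by positivity)
        have hM' : insert e M ∈ 𝒜 := by
          constructor
          · intro x hx
            rcases Set.mem_insert_iff.mp hx with rfl | hxM
            · exact ⟨he0, he1, hea⟩
            · exact hMgood.1 x hxM
          · intro x hx z hz hxz
            rcases Set.mem_insert_iff.mp hx with rfl | hxM <;>
              rcases Set.mem_insert_iff.mp hz with h' | hzM
            · exact absurd h'.symm hxz
            · exact hedisjM z hzM
            · subst h'
              rw [inf_comm]
              exact hedisjM _ hxM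
            · exact hMgood.2 x hxM z hzM hxz
        have hsub : insert e M ⊆ M := hM.2 hM' (Set.subset_insert e M)
        have heM : e ∈ M := hsub (Set.mem_insert e M)
        have : e ⊓ e = 0 := hedisjM e heM
        rw [inf_idem] at this
        rw [this, norm_zero] at he1
        norm_num at he1
      have hyu : y = u := by
        have := sub_eq_zero.mp hweq
        exact this
      rw [hyu, hu]
      refine Submodule.sum_mem _ fun x hx => ?_
      exact Submodule.smul_mem _ _ (Submodule.subset_span ((hMfmem x).mp hx))
    have hspan_top : Submodule.span ℝ M = ⊤ := by
      rw [eq_top_iff]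
      intro z _
      have h1 := hspan _ (posPart_nonneg z)
      have h2 := hspan _ (negPart_nonneg z)
      have h3 : z = z⁺ - z⁻ := (posPart_sub_negPart z).symm
      rw [h3]
      exact Submodule.sub_mem _ h1 h2
    have hfg : (⊤ : Submodule ℝ E).FG := by
      refine ⟨hMfin.toFinset, ?_⟩
      rw [hMfin.coe_toFinset]
      exact hspan_top
    exact Module.finite_def.mpr hfg
  · -- easy direction
    intro hfd D _ hbdd
    exact hbdd.isCompact_closure
end
end

section
/- Let E be a Banach lattice, Y a Banach space, and suppose T_n : E → Y are d-compact operators converging to T in operator norm. Then T is d-compact. -/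
open Filter Topology Bornology

noncomputable section

/-- A d-compact operator: maps every disjoint bounded set to a relatively compact set. -/
def DCompact {E Y : Type*} [NormedAddCommGroup E] [Lattice E] [HasSolidNorm E] [IsOrderedAddMonoid E] [NormedSpace ℝ E]
    [NormedAddCommGroup Y] [NormedSpace ℝ Y] (T : E →L[ℝ] Y) : Prop :=
  ∀ D : Set E, DisjointSet D → IsBounded D → IsCompact (closure (T '' D))

/-- The uniform limit of d-compact operators is d-compact. -/
theorem dCompact_of_tendsto {E Y : Type*}
    [NormedAddCommGroup E] [Lattice E] [HasSolidNorm E] [IsOrderedAddMonoid E] [NormedSpace ℝ E] [CompleteSpace E]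
    [NormedAddCommGroup Y] [NormedSpace ℝ Y] [CompleteSpace Y]
    (T : ℕ → E →L[ℝ] Y) (T₀ : E →L[ℝ] Y)
    (hT : ∀ n, DCompact (T n))
    (hlim : Tendsto (fun n => ‖T n - T₀‖) atTop (𝓝 0)) :
    DCompact T₀ := by
  intro D hD hDb
  -- get a bound C on D
  obtain ⟨C₀, hC₀⟩ := hDb.subset_closedBall 0
  set C := max C₀ 0 with hCdef
  have hC : D ⊆ Metric.closedBall 0 C :=
    hC₀.trans (Metric.closedBall_subset_closedBall (le_max_left _ _))
  have hC0 : 0 ≤ C := le_max_right _ _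
  apply TotallyBounded.isCompact_of_isClosed _ isClosed_closure
  apply TotallyBounded.closure
  rw [Metric.totallyBounded_iff]
  intro ε hε
  -- choose n with ‖T n - T₀‖ * (C + 1) < ε / 2
  have h2 : (0:ℝ) < ε / (2 * (C + 1)) := by positivity
  obtain ⟨n, hn'⟩ := Metric.tendsto_atTop.mp hlim (ε / (2 * (C + 1))) h2
  have hn := hn' n le_rfl
  have hTn : TotallyBounded (T n '' D) :=
    (hT n D hD hDb).totallyBounded.subset subset_closure
  obtain ⟨t, htfin, htcov⟩ := (Metric.totallyBounded_iff.mp hTn) (ε / 2) (by positivity)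
  refine ⟨t, htfin, ?_⟩
  rintro _ ⟨x, hxD, rfl⟩
  have hmem : T n x ∈ ⋃ y ∈ t, Metric.ball y (ε / 2) := htcov ⟨x, hxD, rfl⟩
  simp only [Set.mem_iUnion, Metric.mem_ball] at hmem ⊢
  obtain ⟨y, hyt, hy⟩ := hmem
  refine ⟨y, hyt, ?_⟩
  have hx : ‖x‖ ≤ C := by
    simpa using hC hxD
  have hnorm : ‖T₀ x - T n x‖ ≤ ‖T n - T₀‖ * C := by
    calc ‖T₀ x - T n x‖ = ‖(T n - T₀) x‖ := by
          rw [ContinuousLinearMap.sub_apply, norm_sub_rev]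
      _ ≤ ‖T n - T₀‖ * ‖x‖ := (T n - T₀).le_opNorm x
      _ ≤ ‖T n - T₀‖ * C := by
          gcongr
  have hsmall : ‖T n - T₀‖ * C ≤ ε / 2 := by
    have h1 : ‖T n - T₀‖ < ε / (2 * (C + 1)) := by
      have := hn
      simpa [Real.dist_eq, abs_of_nonneg (norm_nonneg _)] using this
    calc ‖T n - T₀‖ * C ≤ (ε / (2 * (C + 1))) * (C + 1) :=
          mul_le_mul h1.le (by linarith) hC0 (by positivity)
      _ = ε / 2 := by field_simp
  have : dist (T₀ x) y ≤ dist (T₀ x) (T n x) + dist (T n x) y := dist_triangle _ _ _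
  simp only [dist_eq_norm] at this ⊢
  simp only [dist_eq_norm] at hy
  linarith
end
end

section
/- Let E, F be Banach lattices with E' a KB-space, and let 0 ≤ S ≤ T be operators from E to F. If T is d-compact then S is d-compact. -/
open Filter Topology Bornology

noncomputable section

/-- A functional on `E` is positive if it is nonnegative on the positive cone. -/
def DualPos {E : Type*} [NormedAddCommGroup E] [Lattice E] [HasSolidNorm E] [IsOrderedAddMonoid E] [NormedSpace ℝ E]
    (f : StrongDual ℝ E) : Prop :=
  ∀ x : E, 0 ≤ x → 0 ≤ f x

/-- The order on the dual: `f ≤ g` iff `f x ≤ g x` for all `x ≥ 0`. -/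
def DualLE {E : Type*} [NormedAddCommGroup E] [Lattice E] [HasSolidNorm E] [IsOrderedAddMonoid E] [NormedSpace ℝ E]
    (f g : StrongDual ℝ E) : Prop :=
  ∀ x : E, 0 ≤ x → f x ≤ g x

/-- The dual `E'` is a KB-space: every increasing norm-bounded sequence of positive
functionals is norm convergent. -/
def DualKB (E : Type*) [NormedAddCommGroup E] [Lattice E] [HasSolidNorm E] [IsOrderedAddMonoid E] [NormedSpace ℝ E] : Prop :=
  ∀ f : ℕ → StrongDual ℝ E, (∀ n, DualPos (f n)) →
    (∀ n, DualLE (f n) (f (n + 1))) → (∃ M : ℝ, ∀ n, ‖f n‖ ≤ M) →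
    ∃ g : StrongDual ℝ E, Tendsto (fun n => ‖f n - g‖) atTop (𝓝 0)

section Aux
variable {E : Type*} [NormedAddCommGroup E] [Lattice E] [HasSolidNorm E] [IsOrderedAddMonoid E]

lemma add_inf_le_of_nonneg {a b c : E} (ha : 0 ≤ a) (hb : 0 ≤ b) (hc : 0 ≤ c) :
    (a + b) ⊓ c ≤ a ⊓ c + b ⊓ c := by
  have key : a ⊓ c + b ⊓ c = ((a + b) ⊓ (a + c)) ⊓ ((c + b) ⊓ (c + c)) := by
    rw [inf_add (a := a) (b := c) (c := b ⊓ c), add_inf, add_inf]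
  rw [key]
  refine le_inf (le_inf inf_le_left (inf_le_right.trans (le_add_of_nonneg_left ha)))
    (le_inf (inf_le_right.trans (le_add_of_nonneg_right hb))
      (inf_le_right.trans (le_add_of_nonneg_right hc)))

lemma inf_nsmul_eq_zero {a b : E} (ha : 0 ≤ a) (hb : 0 ≤ b) (h : a ⊓ b = 0) (n : ℕ) :
    a ⊓ (n • b) = 0 := by
  induction n with
  | zero => simpa using inf_eq_right.mpr ha
  | succ n ih =>
    refine le_antisymm ?_ (le_inf ha (nsmul_nonneg hb _))
    rw [succ_nsmul]
    calc a ⊓ (n • b + b) = (n • b + b) ⊓ a := inf_comm ..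
    _ ≤ n • b ⊓ a + b ⊓ a := add_inf_le_of_nonneg (nsmul_nonneg hb _) hb ha
    _ = 0 := by rw [inf_comm (n • b) a, inf_comm b a, ih, h, add_zero]

lemma sum_inf_eq_zero {n : ℕ} {a : ℕ → E} {b : E} (ha : ∀ k, 0 ≤ a k) (hb : 0 ≤ b)
    (h : ∀ k < n, a k ⊓ b = 0) : (∑ k ∈ Finset.range n, a k) ⊓ b = 0 := by
  induction n with
  | zero => simpa using inf_eq_left.mpr hb
  | succ n ih =>
    refine le_antisymm ?_ (le_inf (Finset.sum_nonneg fun k _ => ha k) hb)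
    rw [Finset.sum_range_succ]
    calc (∑ k ∈ Finset.range n, a k + a n) ⊓ b
        ≤ (∑ k ∈ Finset.range n, a k) ⊓ b + a n ⊓ b :=
          add_inf_le_of_nonneg (Finset.sum_nonneg fun k _ => ha k) (ha n) hb
    _ = 0 := by rw [ih (fun k hk => h k (by omega)), h n (by omega), add_zero]

lemma sum_disjoint_le {n : ℕ} {a : ℕ → E} {w : E} (hw : 0 ≤ w) (ha : ∀ k, 0 ≤ a k)
    (hd : ∀ k < n, ∀ l < n, k ≠ l → a k ⊓ a l = 0) (hle : ∀ k < n, a k ≤ w) :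
    ∑ k ∈ Finset.range n, a k ≤ w := by
  induction n with
  | zero => simpa using hw
  | succ n ih =>
    have hinf : (∑ k ∈ Finset.range n, a k) ⊓ a n = 0 :=
      sum_inf_eq_zero ha (ha n) fun k hk => hd k (by omega) n (by omega) (by omega)
    have hsum : ∑ k ∈ Finset.range (n + 1), a k
        = (∑ k ∈ Finset.range n, a k) ⊔ a n := by
      rw [Finset.sum_range_succ, ← inf_add_sup (∑ k ∈ Finset.range n, a k) (a n), hinf,
        zero_add]
    rw [hsum]
    exact sup_le (ih (fun k hk l hl => hd k (by omega) l (by omega))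
      (fun k hk => hle k (by omega))) (hle n (by omega))

end Aux

section Ext
variable {E : Type*} [NormedAddCommGroup E] [Lattice E] [HasSolidNorm E] [IsOrderedAddMonoid E] [NormedSpace ℝ E]

lemma norm_posPart_le' (a : E) : ‖a⁺‖ ≤ ‖a‖ := by
  rw [← norm_abs_eq_norm a]
  refine norm_le_norm_of_abs_le_abs ?_
  rw [abs_of_nonneg (posPart_nonneg a), abs_abs, ← posPart_add_negPart a]
  exact le_add_of_nonneg_right (negPart_nonneg a)

lemma norm_negPart_le' (a : E) : ‖a⁻‖ ≤ ‖a‖ := by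
  rw [← norm_abs_eq_norm a]
  refine norm_le_norm_of_abs_le_abs ?_
  rw [abs_of_nonneg (negPart_nonneg a), abs_abs, ← posPart_add_negPart a]
  exact le_add_of_nonneg_left (posPart_nonneg a)

lemma exists_dual_extension (p : E → ℝ) (C : ℝ)
    (hadd : ∀ x y : E, 0 ≤ x → 0 ≤ y → p (x + y) = p x + p y)
    (hbound : ∀ x : E, 0 ≤ x → |p x| ≤ C * ‖x‖) :
    ∃ g : StrongDual ℝ E, ∀ x : E, 0 ≤ x → g x = p x := by
  set D := max C 0 with hD
  have hboundD : ∀ x : E, 0 ≤ x → |p x| ≤ D * ‖x‖ := fun x hx =>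
    (hbound x hx).trans (mul_le_mul_of_nonneg_right (le_max_left _ _) (norm_nonneg _))
  have hp0 : p 0 = 0 := by have := hadd 0 0 le_rfl le_rfl; simp at this; linarith
  have key : ∀ a b c d : E, 0 ≤ a → 0 ≤ b → 0 ≤ c → 0 ≤ d → a - b = c - d →
      p a - p b = p c - p d := by
    intro a b c d ha hb hc hd h
    have h' : a + d = c + b := sub_eq_sub_iff_add_eq_add.mp h
    have h2 : p a + p d = p c + p b := by
      rw [← hadd a d ha hd, ← hadd c b hc hb, h']
    linarith
  set P : E → ℝ := fun x => p x⁺ - p x⁻ with hP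
  have Padd : ∀ x y : E, P (x + y) = P x + P y := by
    intro x y
    have h1 : P (x + y) = p (x⁺ + y⁺) - p (x⁻ + y⁻) :=
      key _ _ _ _ (posPart_nonneg _) (negPart_nonneg _)
        (add_nonneg (posPart_nonneg _) (posPart_nonneg _))
        (add_nonneg (negPart_nonneg _) (negPart_nonneg _))
        (by rw [posPart_sub_negPart]
            have h : x⁺ + y⁺ - (x⁻ + y⁻) = (x⁺ - x⁻) + (y⁺ - y⁻) := by abel
            rw [h, posPart_sub_negPart, posPart_sub_negPart])
    rw [h1, hadd _ _ (posPart_nonneg _) (posPart_nonneg _),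
      hadd _ _ (negPart_nonneg _) (negPart_nonneg _)]
    simp only [hP]; ring
  have Pbound : ∀ x : E, |P x| ≤ 2 * D * ‖x‖ := by
    intro x
    have h1 := hboundD x⁺ (posPart_nonneg _)
    have h2 := hboundD x⁻ (negPart_nonneg _)
    have h3 : ‖x⁺‖ ≤ ‖x‖ := norm_posPart_le' x
    have h4 : ‖x⁻‖ ≤ ‖x‖ := norm_negPart_le' x
    have hD0 : 0 ≤ D := le_max_right _ _
    have := abs_sub (p x⁺) (p x⁻)
    calc |P x| ≤ |p x⁺| + |p x⁻| := abs_sub _ _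
    _ ≤ D * ‖x‖ + D * ‖x‖ := by nlinarith
    _ = 2 * D * ‖x‖ := by ring
  let P' : E →+ ℝ := AddMonoidHom.mk' P Padd
  have hlip : LipschitzWith (Real.toNNReal (2 * D)) P' := by
    refine LipschitzWith.of_dist_le_mul fun x y => ?_
    have : P' x - P' y = P' (x - y) := by rw [map_sub]
    rw [Real.dist_eq, this, Real.coe_toNNReal _ (by positivity), dist_eq_norm]
    exact Pbound (x - y)
  refine ⟨P'.toRealLinearMap hlip.continuous, fun x hx => ?_⟩
  show P x = p x
  rw [hP]
  simp only [posPart_of_nonneg hx, negPart_of_nonneg hx, hp0, sub_zero]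

end Ext

section Riesz
variable {E : Type*} [NormedAddCommGroup E] [Lattice E] [HasSolidNorm E] [IsOrderedAddMonoid E] [NormedSpace ℝ E]

omit [NormedSpace ℝ E] in
lemma riesz_decomp {z a b : E} (ha : 0 ≤ a) (hb : 0 ≤ b) (h : |z| ≤ a + b) :
    ∃ z₁ z₂ : E, z = z₁ + z₂ ∧ |z₁| ≤ a ∧ |z₂| ≤ b := by
  have hz1 : -(a + b) ≤ z := neg_le.mp ((neg_le_abs z).trans h)
  have hz2 : z ≤ a + b := (le_abs_self z).trans h
  set s := (z ⊓ a) ⊔ (-a) with hs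
  refine ⟨s, z - s, by abel, ?_, ?_⟩
  · exact abs_le'.mpr ⟨sup_le inf_le_right (neg_le_self ha), neg_le.mpr le_sup_right⟩
  · refine abs_le'.mpr ⟨?_, neg_le.mpr ?_⟩
    · have h2 : z - b ≤ s := le_sup_left.trans' (le_inf (sub_le_self z hb)
        (sub_le_iff_le_add.mpr hz2))
      calc z - s ≤ z - (z - b) := sub_le_sub_left h2 z
      _ = b := by abel
    · have h1 : s ≤ z + b := by
        refine sup_le (inf_le_left.trans (le_add_of_nonneg_right hb)) ?_
        calc -a = -(a + b) + b := by abel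
        _ ≤ z + b := add_le_add_left hz1 b
      calc -b = z - (z + b) := by abel
      _ ≤ z - s := sub_le_sub_left h1 z

set_option maxHeartbeats 2000000 in
lemma exists_dual_abs (f : StrongDual ℝ E) :
    ∃ g : StrongDual ℝ E, (∀ x : E, 0 ≤ x → 0 ≤ g x) ∧
      (∀ x : E, 0 ≤ x → |f x| ≤ g x) ∧ (∀ x : E, 0 ≤ x → g x ≤ ‖f‖ * ‖x‖) := by
  classical
  set p : E → ℝ := fun y => sSup (f '' {z | |z| ≤ y}) with hp
  have hmem : ∀ y : E, 0 ≤ y → (0 : ℝ) ∈ f '' {z | |z| ≤ y} := by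
    intro y hy
    exact ⟨0, by simpa using hy, map_zero f⟩
  have hne : ∀ y : E, 0 ≤ y → (f '' {z | |z| ≤ y}).Nonempty := fun y hy => ⟨0, hmem y hy⟩
  have hbdd : ∀ y : E, 0 ≤ y → BddAbove (f '' {z | |z| ≤ y}) := by
    intro y hy
    refine ⟨‖f‖ * ‖y‖, ?_⟩
    rintro - ⟨z, hz, rfl⟩
    calc f z ≤ ‖f‖ * ‖z‖ := (le_abs_self _).trans (f.le_opNorm z)
    _ ≤ ‖f‖ * ‖y‖ := mul_le_mul_of_nonneg_left
        (norm_le_norm_of_abs_le_abs (hz.trans (le_abs_self y))) (norm_nonneg f)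
  have hple : ∀ y : E, 0 ≤ y → p y ≤ ‖f‖ * ‖y‖ := by
    intro y hy
    refine csSup_le (hne y hy) ?_
    rintro - ⟨z, hz, rfl⟩
    calc f z ≤ ‖f‖ * ‖z‖ := (le_abs_self _).trans (f.le_opNorm z)
    _ ≤ ‖f‖ * ‖y‖ := mul_le_mul_of_nonneg_left
        (norm_le_norm_of_abs_le_abs (hz.trans (le_abs_self y))) (norm_nonneg f)
  have hpnn : ∀ y : E, 0 ≤ y → 0 ≤ p y := fun y hy =>
    le_csSup (hbdd y hy) (hmem y hy)
  have hfle : ∀ y : E, 0 ≤ y → ∀ z : E, |z| ≤ y → f z ≤ p y := fun y hy z hz =>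
    le_csSup (hbdd y hy) ⟨z, hz, rfl⟩
  have hadd : ∀ x y : E, 0 ≤ x → 0 ≤ y → p (x + y) = p x + p y := by
    intro x y hx hy
    refine le_antisymm ?_ ?_
    · refine csSup_le (hne _ (add_nonneg hx hy)) ?_
      rintro - ⟨z, hz, rfl⟩
      obtain ⟨z₁, z₂, rfl, h1, h2⟩ := riesz_decomp hx hy hz
      rw [map_add]
      exact add_le_add (hfle x hx z₁ h1) (hfle y hy z₂ h2)
    · have step : ∀ z₁ : E, |z₁| ≤ x → p y ≤ p (x + y) - f z₁ := by
        intro z₁ hz1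
        refine csSup_le (hne y hy) ?_
        rintro - ⟨z₂, hz2, rfl⟩
        rw [le_sub_iff_add_le, add_comm, ← map_add]
        exact hfle _ (add_nonneg hx hy) _ ((abs_add_le _ _).trans (add_le_add hz1 hz2))
      have step2 : p x ≤ p (x + y) - p y := by
        refine csSup_le (hne x hx) ?_
        rintro - ⟨z₁, hz1, rfl⟩
        have := le_sub_iff_add_le.mp (step z₁ hz1)
        rw [le_sub_iff_add_le]
        linarith
      linarith [step2]
  have hbound : ∀ x : E, 0 ≤ x → |p x| ≤ ‖f‖ * ‖x‖ := by
    intro x hx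
    rw [abs_of_nonneg (hpnn x hx)]
    exact hple x hx
  obtain ⟨g, hg⟩ := exists_dual_extension p ‖f‖ hadd hbound
  refine ⟨g, fun x hx => (hg x hx).symm ▸ hpnn x hx, fun x hx => ?_, fun x hx =>
    (hg x hx).symm ▸ hple x hx⟩
  rw [hg x hx]
  refine abs_le.mpr ⟨?_, hfle x hx x (le_of_eq (abs_of_nonneg hx))⟩
  have := hfle x hx (-x) (by rw [abs_neg]; exact le_of_eq (abs_of_nonneg hx))
  rw [map_neg] at this
  linarith

end Riesz

section Comp
variable {E : Type*} [NormedAddCommGroup E] [Lattice E] [HasSolidNorm E] [IsOrderedAddMonoid E] [NormedSpace ℝ E]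

lemma exists_componental (g : StrongDual ℝ E) (hg : ∀ x : E, 0 ≤ x → 0 ≤ g x)
    (x : E) (hx : 0 ≤ x) :
    ∃ F : StrongDual ℝ E, ∀ y : E, 0 ≤ y →
      Tendsto (fun n : ℕ => g (y ⊓ n • x)) atTop (𝓝 (F y)) := by
  have gmono : ∀ a b : E, a ≤ b → g a ≤ g b := by
    intro a b hab
    have := hg (b - a) (sub_nonneg.mpr hab)
    rw [map_sub] at this
    linarith
  have mono : ∀ y : E, Monotone (fun n : ℕ => g (y ⊓ n • x)) := by
    intro y n m hnm
    exact gmono _ _ (inf_le_inf_left y (nsmul_le_nsmul_left hx hnm))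
  have bdd : ∀ y : E, 0 ≤ y → BddAbove (Set.range (fun n : ℕ => g (y ⊓ n • x))) := by
    intro y hy
    refine ⟨g y, ?_⟩
    rintro - ⟨n, rfl⟩
    exact gmono _ _ inf_le_left
  set p : E → ℝ := fun y => ⨆ n : ℕ, g (y ⊓ n • x) with hp
  have htend : ∀ y : E, 0 ≤ y → Tendsto (fun n : ℕ => g (y ⊓ n • x)) atTop (𝓝 (p y)) :=
    fun y hy => tendsto_atTop_ciSup (mono y) (bdd y hy)
  have hnn : ∀ y : E, 0 ≤ y → ∀ n : ℕ, 0 ≤ g (y ⊓ n • x) :=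
    fun y hy n => hg _ (le_inf hy (nsmul_nonneg hx n))
  have hley : ∀ y : E, 0 ≤ y → ∀ n : ℕ, g (y ⊓ n • x) ≤ g y :=
    fun y hy n => gmono _ _ inf_le_left
  have hadd : ∀ y z : E, 0 ≤ y → 0 ≤ z → p (y + z) = p y + p z := by
    intro y z hy hz
    have h1 := htend (y + z) (add_nonneg hy hz)
    have h2 : Tendsto (fun n : ℕ => g (y ⊓ n • x) + g (z ⊓ n • x)) atTop
        (𝓝 (p y + p z)) := (htend y hy).add (htend z hz)
    have h3 : Tendsto (fun n : ℕ => g ((y + z) ⊓ (2 * n) • x)) atTop (𝓝 (p (y + z))) := by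
      refine h1.comp ?_
      exact tendsto_atTop_atTop.mpr fun b => ⟨b, fun a ha => by omega⟩
    refine le_antisymm ?_ ?_
    · refine le_of_tendsto_of_tendsto' h1 h2 fun n => ?_
      have : (y + z) ⊓ n • x ≤ y ⊓ n • x + z ⊓ n • x :=
        add_inf_le_of_nonneg hy hz (nsmul_nonneg hx n)
      rw [← map_add]
      exact gmono _ _ this
    · refine le_of_tendsto_of_tendsto' h2 h3 fun n => ?_
      rw [← map_add]
      refine gmono _ _ ?_
      have h2n : (2 * n) • x = n • x + n • x := by
        rw [two_mul, add_nsmul]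
      rw [h2n]
      exact le_inf (add_le_add inf_le_left inf_le_left)
        (add_le_add inf_le_right inf_le_right)
  have hbound : ∀ y : E, 0 ≤ y → |p y| ≤ ‖g‖ * ‖y‖ := by
    intro y hy
    have h0 : 0 ≤ p y := le_ciSup_of_le (bdd y hy) 0 (hnn y hy 0)
    have h1 : p y ≤ g y := ciSup_le (hley y hy)
    rw [abs_of_nonneg h0]
    exact h1.trans ((le_abs_self _).trans (g.le_opNorm y))
  obtain ⟨F, hF⟩ := exists_dual_extension p ‖g‖ hadd hbound
  exact ⟨F, fun y hy => (hF y hy).symm ▸ htend y hy⟩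

end Comp
section WeakNull
variable {E : Type*} [NormedAddCommGroup E] [Lattice E] [HasSolidNorm E] [IsOrderedAddMonoid E] [NormedSpace ℝ E]

lemma disjoint_tendsto_zero_pos (hE : DualKB E) (y : ℕ → E) (hy0 : ∀ n, 0 ≤ y n)
    (hyd : ∀ m n, m ≠ n → y m ⊓ y n = 0) (M : ℝ) (hM : ∀ n, ‖y n‖ ≤ M)
    (g : StrongDual ℝ E) (hg : DualPos g) :
    Tendsto (fun n => g (y n)) atTop (𝓝 0) := by
  have gmono : ∀ a b : E, a ≤ b → g a ≤ g b := by
    intro a b hab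
    have := hg (b - a) (sub_nonneg.mpr hab)
    rw [map_sub] at this
    linarith
  choose F hF using fun n => exists_componental g hg (y n) (hy0 n)
  have Fpos : ∀ n, DualPos (F n) := by
    intro n z hz
    exact ge_of_tendsto' (hF n z hz) (fun j => hg _ (le_inf hz (nsmul_nonneg (hy0 n) j)))
      |>.trans_eq rfl |> fun h => h
  set G : ℕ → StrongDual ℝ E := fun n => ∑ k ∈ Finset.range n, F k with hG
  have Gapp : ∀ n (z : E), G n z = ∑ k ∈ Finset.range n, F k z := by
    intro n z
    simp [hG]
  have GposApp : ∀ n (z : E), 0 ≤ z → 0 ≤ G n z := by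
    intro n z hz
    rw [Gapp]
    exact Finset.sum_nonneg fun k _ => Fpos k z hz
  have claim : ∀ n (w : E), 0 ≤ w → G n w ≤ g w := by
    intro n w hw
    have ht : Tendsto (fun j : ℕ => ∑ k ∈ Finset.range n, g (w ⊓ j • y k)) atTop
        (𝓝 (∑ k ∈ Finset.range n, F k w)) :=
      tendsto_finset_sum _ (fun k _ => hF k w hw)
    rw [Gapp]
    refine le_of_tendsto ht (Eventually.of_forall fun j => ?_)
    rw [← map_sum]
    refine gmono _ _ ?_
    refine sum_disjoint_le hw (fun k => le_inf hw (nsmul_nonneg (hy0 k) j)) ?_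
      (fun k _ => inf_le_left)
    intro k _ l _ hkl
    refine le_antisymm ?_ (le_inf (le_inf hw (nsmul_nonneg (hy0 k) j))
      (le_inf hw (nsmul_nonneg (hy0 l) j)))
    have h1 : y k ⊓ j • y l = 0 := inf_nsmul_eq_zero (hy0 k) (hy0 l) (hyd k l hkl) j
    have h2 : (j • y l) ⊓ (j • y k) = 0 :=
      inf_nsmul_eq_zero (nsmul_nonneg (hy0 l) j) (hy0 k) (by rw [inf_comm]; exact h1) j
    calc (w ⊓ j • y k) ⊓ (w ⊓ j • y l) ≤ (j • y k) ⊓ (j • y l) :=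
      inf_le_inf inf_le_right inf_le_right
    _ = 0 := by rw [inf_comm]; exact h2
  have Gnorm : ∀ n, ‖G n‖ ≤ ‖g‖ := by
    intro n
    refine ContinuousLinearMap.opNorm_le_bound _ (norm_nonneg g) fun z => ?_
    have hz : G n z = G n z⁺ - G n z⁻ := by
      rw [← map_sub, posPart_sub_negPart]
    have h1 : 0 ≤ G n z⁺ := GposApp n _ (posPart_nonneg z)
    have h2 : 0 ≤ G n z⁻ := GposApp n _ (negPart_nonneg z)
    have h3 : G n z⁺ + G n z⁻ = G n |z| := by rw [← map_add, posPart_add_negPart]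
    have h4 : G n |z| ≤ g |z| := claim n _ (abs_nonneg z)
    have h5 : g |z| ≤ ‖g‖ * ‖z‖ := by
      calc g |z| ≤ |g (|z|)| := le_abs_self _
      _ ≤ ‖g‖ * ‖(|z| : E)‖ := g.le_opNorm _
      _ = ‖g‖ * ‖z‖ := by rw [norm_abs_eq_norm]
    rw [Real.norm_eq_abs, hz]
    refine (abs_le.mpr ⟨by linarith, by linarith⟩)
  obtain ⟨h, htend⟩ := hE G (fun n z hz => GposApp n z hz)
    (fun n z hz => by
      rw [Gapp, Gapp, Finset.sum_range_succ]
      exact le_add_of_nonneg_right (Fpos n z hz))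
    ⟨‖g‖, Gnorm⟩
  have hFG : ∀ n, F n = G (n + 1) - G n := by
    intro n
    rw [hG]
    simp [Finset.sum_range_succ]
  have hFn : Tendsto (fun n => ‖F n‖) atTop (𝓝 0) := by
    have hb : Tendsto (fun n => ‖G (n + 1) - h‖ + ‖G n - h‖) atTop (𝓝 (0 + 0)) :=
      (htend.comp (tendsto_add_atTop_nat 1)).add htend
    rw [add_zero] at hb
    refine squeeze_zero (fun n => norm_nonneg _) (fun n => ?_) hb
    rw [hFG n]
    calc ‖G (n + 1) - G n‖ = ‖(G (n + 1) - h) - (G n - h)‖ := by abel_nf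
    _ ≤ ‖G (n + 1) - h‖ + ‖G n - h‖ := norm_sub_le _ _
  have hgF : ∀ n, g (y n) = F n (y n) := by
    intro n
    refine tendsto_nhds_unique ?_ (hF n (y n) (hy0 n))
    refine tendsto_atTop_of_eventually_const (i₀ := 1) fun j hj => ?_
    have : y n ≤ j • y n := by
      calc y n = 1 • y n := (one_nsmul _).symm
      _ ≤ j • y n := nsmul_le_nsmul_left (hy0 n) hj
    rw [inf_eq_left.mpr this]
  set C := max M 0 with hC
  have hb2 : Tendsto (fun n => ‖F n‖ * C) atTop (𝓝 0) := by
    simpa using hFn.mul_const C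
  refine squeeze_zero (fun n => hg _ (hy0 n)) (fun n => ?_) hb2
  rw [hgF n]
  calc F n (y n) ≤ |F n (y n)| := le_abs_self _
  _ ≤ ‖F n‖ * ‖y n‖ := (F n).le_opNorm _
  _ ≤ ‖F n‖ * C := mul_le_mul_of_nonneg_left ((hM n).trans (le_max_left _ _))
      (norm_nonneg _)

lemma disjoint_tendsto_zero (hE : DualKB E) (y : ℕ → E) (hy0 : ∀ n, 0 ≤ y n)
    (hyd : ∀ m n, m ≠ n → y m ⊓ y n = 0) (M : ℝ) (hM : ∀ n, ‖y n‖ ≤ M)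
    (f : StrongDual ℝ E) : Tendsto (fun n => f (y n)) atTop (𝓝 0) := by
  obtain ⟨gabs, h1, h2, h3⟩ := exists_dual_abs f
  refine squeeze_zero_norm (fun n => ?_) (disjoint_tendsto_zero_pos hE y hy0 hyd M hM gabs h1)
  rw [Real.norm_eq_abs]
  exact h2 (y n) (hy0 n)

end WeakNull

/-- Domination for d-compact operators: if `E'` is a KB-space, `0 ≤ S ≤ T` and `T`
is d-compact, then `S` is d-compact. -/
theorem dCompact_of_dominated {E F : Type*}
    [NormedAddCommGroup E] [Lattice E] [HasSolidNorm E] [IsOrderedAddMonoid E] [NormedSpace ℝ E] [CompleteSpace E]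
    [NormedAddCommGroup F] [Lattice F] [HasSolidNorm F] [IsOrderedAddMonoid F] [NormedSpace ℝ F] [CompleteSpace F]
    (hE : DualKB E) (S T : E →L[ℝ] F)
    (hS : ∀ x : E, 0 ≤ x → 0 ≤ S x)
    (hST : ∀ x : E, 0 ≤ x → S x ≤ T x)
    (hT : ∀ D : Set E, DisjointSet D → IsBounded D → IsCompact (closure (T '' D))) :
    ∀ D : Set E, DisjointSet D → IsBounded D → IsCompact (closure (S '' D)) := by
  intro D hD hDb
  obtain ⟨C, hC⟩ := isBounded_iff_forall_norm_le.mp hDb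
  have Smono : ∀ a b : E, a ≤ b → S a ≤ S b := by
    intro a b hab
    have := hS (b - a) (sub_nonneg.mpr hab)
    rw [map_sub] at this
    rwa [← sub_nonneg]
  -- norm domination : ‖S x‖ ≤ ‖T |x|‖
  have hdom : ∀ x : E, ‖S x‖ ≤ ‖T |x|‖ := by
    intro x
    have h1 : S x ≤ S |x| := Smono _ _ (le_abs_self x)
    have h2 : -(S x) ≤ S |x| := by
      rw [← map_neg]
      exact Smono _ _ (neg_le_abs x)
    have h3 : S |x| ≤ T |x| := hST _ (abs_nonneg x)
    have h4 : (0 : F) ≤ T |x| := (hS _ (abs_nonneg x)).trans h3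
    refine norm_le_norm_of_abs_le_abs ?_
    rw [abs_of_nonneg h4]
    exact abs_le'.mpr ⟨h1.trans h3, h2.trans h3⟩
  -- key finiteness
  have key : ∀ ε : ℝ, 0 < ε → {x ∈ D | ε ≤ ‖S x‖}.Finite := by
    intro ε hε
    by_contra hinf
    set e := ((Set.Infinite.natEmbedding _) (by rwa [Set.Infinite])) with he
    set x : ℕ → E := fun n => (e n : {x // x ∈ {x ∈ D | ε ≤ ‖S x‖}}) with hx
    have hxD : ∀ n, x n ∈ D := fun n => (e n).2.1
    have hxS : ∀ n, ε ≤ ‖S (x n)‖ := fun n => (e n).2.2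
    have hxinj : ∀ m n, m ≠ n → x m ≠ x n := by
      intro m n hmn hc
      exact hmn (e.injective (Subtype.ext hc))
    set y : ℕ → E := fun n => |x n| with hy
    have hy0 : ∀ n, 0 ≤ y n := fun n => abs_nonneg _
    have hyd : ∀ m n, m ≠ n → y m ⊓ y n = 0 :=
      fun m n hmn => hD _ (hxD m) _ (hxD n) (hxinj m n hmn)
    have hyC : ∀ n, ‖y n‖ ≤ C := by
      intro n
      rw [hy]
      simp only [norm_abs_eq_norm]
      exact hC _ (hxD n)
    -- range y is a bounded disjoint set
    have hDS : DisjointSet (Set.range y) := by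
      rintro - ⟨m, rfl⟩ - ⟨n, rfl⟩ hne
      have hmn : m ≠ n := by rintro rfl; exact hne rfl
      rw [abs_of_nonneg (hy0 m), abs_of_nonneg (hy0 n)]
      exact hyd m n hmn
    have hDbd : IsBounded (Set.range y) := by
      rw [isBounded_iff_forall_norm_le]
      exact ⟨C, by rintro - ⟨n, rfl⟩; exact hyC n⟩
    have hK : IsCompact (closure (T '' Set.range y)) := hT _ hDS hDbd
    -- every functional kills T (y n)
    have hweak : ∀ f : StrongDual ℝ F, Tendsto (fun n => f (T (y n))) atTop (𝓝 0) := by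
      intro f
      exact disjoint_tendsto_zero hE y hy0 hyd C hyC (f.comp T)
    -- T (y n) → 0 in norm
    have hTy : Tendsto (fun n => T (y n)) atTop (𝓝 0) := by
      refine tendsto_of_subseq_tendsto fun ns hns => ?_
      have hmem : ∀ k, T (y (ns k)) ∈ closure (T '' Set.range y) :=
        fun k => subset_closure ⟨y (ns k), ⟨ns k, rfl⟩, rfl⟩
      obtain ⟨z, hzK, φ, hφ, hφt⟩ := hK.isSeqCompact hmem
      have hz0 : z = 0 := by
        by_contra hz
        obtain ⟨f, -, hf⟩ := exists_dual_vector ℝ z (norm_ne_zero_iff.mpr hz)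
        have l1 : Tendsto (fun k => f (T (y (ns (φ k))))) atTop (𝓝 (f z)) :=
          (f.continuous.tendsto z).comp hφt
        have l2 : Tendsto (fun k => f (T (y (ns (φ k))))) atTop (𝓝 0) :=
          (hweak f).comp ((hns.comp hφ.tendsto_atTop))
        have : f z = 0 := tendsto_nhds_unique l1 l2
        rw [this] at hf
        exact hz (by simpa using (norm_eq_zero.mp (by exact_mod_cast hf.symm)))
      exact ⟨φ, hz0 ▸ hφt⟩
    -- contradiction with ε ≤ ‖S (x n)‖
    have hSx : Tendsto (fun n => S (x n)) atTop (𝓝 0) := by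
      refine squeeze_zero_norm (fun n => hdom (x n)) ?_
      have := hTy.norm
      simpa using this
    have : ∀ᶠ n in atTop, ‖S (x n)‖ < ε := by
      have := hSx.norm
      rw [norm_zero] at this
      exact this.eventually_lt_const hε |>.mono fun n h => by simpa using h
    obtain ⟨n, hn⟩ := this.exists
    exact absurd (hxS n) (not_le.mpr hn)
  -- total boundedness
  have htb : TotallyBounded (S '' D) := by
    rw [Metric.totallyBounded_iff]
    intro ε hε
    refine ⟨insert 0 (S '' {x ∈ D | ε / 2 ≤ ‖S x‖}),
      ((key (ε / 2) (by linarith)).image S).insert 0, ?_⟩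
    rintro - ⟨x, hxD, rfl⟩
    by_cases hcase : ε / 2 ≤ ‖S x‖
    · refine Set.mem_biUnion (Set.mem_insert_of_mem _ ⟨x, ⟨hxD, hcase⟩, rfl⟩) ?_
      simp [Metric.mem_ball, hε]
    · refine Set.mem_biUnion (Set.mem_insert _ _) ?_
      rw [Metric.mem_ball, dist_zero_right]
      linarith [not_le.mp hcase]
  exact TotallyBounded.isCompact_of_isClosed (totallyBounded_closure.mpr htb) isClosed_closure
end
end

section
/- Let E, F be Banach lattices and 0 ≤ S ≤ T : E → F, with T d-limited. If the lattice operations in F' are sequentially weak*-continuous, then S is d-limited. -/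
open Filter Topology Bornology

noncomputable section

/-- A sequence `f` in the dual of `Y` is weak*-null. -/
def WStarNull {Y : Type*} [NormedAddCommGroup Y] [NormedSpace ℝ Y]
    (f : ℕ → StrongDual ℝ Y) : Prop :=
  ∀ y : Y, Tendsto (fun n => f n y) atTop (𝓝 0)

/-- The sequence `f` of functionals tends to `0` uniformly on `A`. -/
def UnifNull {Y : Type*} [NormedAddCommGroup Y] [NormedSpace ℝ Y]
    (f : ℕ → StrongDual ℝ Y) (A : Set Y) : Prop :=
  ∀ ε : ℝ, 0 < ε → ∃ N : ℕ, ∀ n ≥ N, ∀ y ∈ A, |f n y| ≤ ε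

/-- A limited subset of a Banach space. -/
def LimitedSet {Y : Type*} [NormedAddCommGroup Y] [NormedSpace ℝ Y] (A : Set Y) : Prop :=
  IsBounded A ∧ ∀ f : ℕ → StrongDual ℝ Y, WStarNull f → UnifNull f A

/-- `g` is the modulus `|f|` of the functional `f`, via the Riesz–Kantorovich formula:
`|f|(x) = sup {f y : |y| ≤ x}` for `x ≥ 0`. -/
def IsAbsOf {F : Type*} [NormedAddCommGroup F] [Lattice F] [HasSolidNorm F] [IsOrderedAddMonoid F] [NormedSpace ℝ F]
    (g f : StrongDual ℝ F) : Prop :=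
  ∀ x : F, 0 ≤ x → g x = sSup ((fun y => f y) '' {y : F | |y| ≤ x})


namespace ModulusAux

variable {F : Type*} [NormedAddCommGroup F] [Lattice F] [HasSolidNorm F] [IsOrderedAddMonoid F] [NormedSpace ℝ F]

/-- Riesz decomposition in a lattice ordered group. -/
theorem riesz_decomp {x z y : F} (hx : 0 ≤ x) (hz : 0 ≤ z) (hy : |y| ≤ x + z) :
    ∃ y₁ y₂ : F, y = y₁ + y₂ ∧ |y₁| ≤ x ∧ |y₂| ≤ z := by
  obtain ⟨h1, h2⟩ := abs_le'.mp hy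
  refine ⟨(y ⊔ (-x)) ⊓ x, y - (y ⊔ (-x)) ⊓ x, by abel, ?_, ?_⟩
  · rw [abs_le']
    exact ⟨inf_le_right, neg_le.mpr (le_inf le_sup_right ((neg_nonpos.mpr hx).trans hx))⟩
  · rw [abs_le']
    constructor
    · refine sub_le_comm.mp (le_inf ((sub_le_self y hz).trans le_sup_left) ?_)
      exact sub_le_iff_le_add.mpr h1
    · rw [neg_sub]
      refine sub_le_iff_le_add.mpr (inf_le_left.trans (sup_le (le_add_of_nonneg_left hz) ?_))
      refine neg_le.mpr ?_
      have := sub_le_iff_le_add.mpr h2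
      simpa [sub_eq_add_neg, add_comm] using this

/-- The Riesz–Kantorovich sup. -/
def pmod (f : StrongDual ℝ F) (x : F) : ℝ :=
  sSup ((fun y => f y) '' {y : F | |y| ≤ x})

theorem pmod_set_nonempty (f : StrongDual ℝ F) {x : F} (hx : 0 ≤ x) :
    ((fun y => f y) '' {y : F | |y| ≤ x}).Nonempty :=
  ⟨f 0, 0, by simpa using hx, rfl⟩

theorem pmod_bddAbove (f : StrongDual ℝ F) {x : F} (hx : 0 ≤ x) :
    BddAbove ((fun y => f y) '' {y : F | |y| ≤ x}) := by
  refine ⟨‖f‖ * ‖x‖, ?_⟩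
  rintro - ⟨y, hy, rfl⟩
  calc f y ≤ ‖f y‖ := le_abs_self _
    _ ≤ ‖f‖ * ‖y‖ := f.le_opNorm y
    _ ≤ ‖f‖ * ‖x‖ := by
        refine mul_le_mul_of_nonneg_left ?_ (norm_nonneg f)
        exact norm_le_norm_of_abs_le_abs (by simpa [abs_of_nonneg hx] using hy)

theorem le_pmod (f : StrongDual ℝ F) {x y : F} (hx : 0 ≤ x) (hy : |y| ≤ x) :
    f y ≤ pmod f x :=
  le_csSup (pmod_bddAbove f hx) ⟨y, hy, rfl⟩

theorem pmod_nonneg (f : StrongDual ℝ F) {x : F} (hx : 0 ≤ x) : 0 ≤ pmod f x := by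
  have := le_pmod f (y := (0 : F)) hx (by simpa using hx)
  simpa using this

theorem pmod_le (f : StrongDual ℝ F) {x : F} (hx : 0 ≤ x) : pmod f x ≤ ‖f‖ * ‖x‖ := by
  refine csSup_le (pmod_set_nonempty f hx) ?_
  rintro - ⟨y, hy, rfl⟩
  calc f y ≤ ‖f y‖ := le_abs_self _
    _ ≤ ‖f‖ * ‖y‖ := f.le_opNorm y
    _ ≤ ‖f‖ * ‖x‖ := mul_le_mul_of_nonneg_left
        (norm_le_norm_of_abs_le_abs (by simpa [abs_of_nonneg hx] using hy)) (norm_nonneg f)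

theorem pmod_add (f : StrongDual ℝ F) {x z : F} (hx : 0 ≤ x) (hz : 0 ≤ z) :
    pmod f (x + z) = pmod f x + pmod f z := by
  apply le_antisymm
  · refine csSup_le (pmod_set_nonempty f (add_nonneg hx hz)) ?_
    rintro - ⟨y, hy, rfl⟩
    obtain ⟨y₁, y₂, rfl, h₁, h₂⟩ := riesz_decomp hx hz hy
    show f (y₁ + y₂) ≤ _
    rw [map_add]
    exact add_le_add (le_pmod f hx h₁) (le_pmod f hz h₂)
  · rw [← le_sub_iff_add_le]
    refine csSup_le (pmod_set_nonempty f hx) ?_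
    rintro - ⟨y₁, hy₁, rfl⟩
    show f y₁ ≤ _
    rw [le_sub_iff_add_le, add_comm, ← le_sub_iff_add_le]
    refine csSup_le (pmod_set_nonempty f hz) ?_
    rintro - ⟨y₂, hy₂, rfl⟩
    show f y₂ ≤ _
    rw [le_sub_iff_add_le, ← map_add]
    refine le_pmod f (add_nonneg hx hz) (le_trans (abs_add_le y₂ y₁) ?_)
    calc |y₂| + |y₁| ≤ z + x := add_le_add hy₂ hy₁
      _ = x + z := add_comm z x

theorem pmod_zero (f : StrongDual ℝ F) : pmod f 0 = 0 := by
  apply le_antisymm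
  · simpa using pmod_le f (le_refl (0 : F))
  · exact pmod_nonneg f (le_refl _)

theorem pmod_diff_eq (f : StrongDual ℝ F) {a b c d : F}
    (ha : 0 ≤ a) (hb : 0 ≤ b) (hc : 0 ≤ c) (hd : 0 ≤ d) (h : a - b = c - d) :
    pmod f a - pmod f b = pmod f c - pmod f d := by
  have h' : a + d = c + b := by
    have h2 := sub_eq_sub_iff_add_eq_add.mp h
    linear_combination (norm := abel) h2
  have h3 := congrArg (pmod f) h'
  rw [pmod_add f ha hd, pmod_add f hc hb] at h3
  linarith

/-- The modulus as a function. -/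
def modFun (f : StrongDual ℝ F) (x : F) : ℝ := pmod f x⁺ - pmod f x⁻

theorem modFun_eq (f : StrongDual ℝ F) {x a b : F} (ha : 0 ≤ a) (hb : 0 ≤ b)
    (h : x = a - b) : modFun f x = pmod f a - pmod f b :=
  pmod_diff_eq f (posPart_nonneg x) (negPart_nonneg x) ha hb
    (by rw [posPart_sub_negPart]; exact h)

theorem modFun_add (f : StrongDual ℝ F) (x y : F) :
    modFun f (x + y) = modFun f x + modFun f y := by
  have h : x + y = (x⁺ + y⁺) - (x⁻ + y⁻) := by
    rw [show x⁺ + y⁺ - (x⁻ + y⁻) = (x⁺ - x⁻) + (y⁺ - y⁻) by abel,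
      posPart_sub_negPart, posPart_sub_negPart]
  rw [modFun_eq f (add_nonneg (posPart_nonneg x) (posPart_nonneg y)) (add_nonneg (negPart_nonneg x) (negPart_nonneg y)) h,
    pmod_add f (posPart_nonneg x) (posPart_nonneg y),
    pmod_add f (negPart_nonneg x) (negPart_nonneg y)]
  unfold modFun; ring

theorem posPart_le_abs' (x : F) : x⁺ ≤ |x| := by
  rw [posPart_def]; exact sup_le (le_abs_self x) (abs_nonneg x)

theorem negPart_le_abs' (x : F) : x⁻ ≤ |x| := by
  rw [negPart_def]; exact sup_le (neg_le_abs x) (abs_nonneg x)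

theorem modFun_bound (f : StrongDual ℝ F) (x : F) :
    ‖modFun f x‖ ≤ 2 * ‖f‖ * ‖x‖ := by
  have h1 : 0 ≤ pmod f x⁺ := pmod_nonneg f (posPart_nonneg x)
  have h2 : 0 ≤ pmod f x⁻ := pmod_nonneg f (negPart_nonneg x)
  have k1 : ‖x⁺‖ ≤ ‖x‖ := norm_le_norm_of_abs_le_abs
    (by rw [abs_of_nonneg (posPart_nonneg x)]; exact posPart_le_abs' x)
  have k2 : ‖x⁻‖ ≤ ‖x‖ := norm_le_norm_of_abs_le_abs
    (by rw [abs_of_nonneg (negPart_nonneg x)]; exact negPart_le_abs' x)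
  have h3 : pmod f x⁺ ≤ ‖f‖ * ‖x‖ :=
    (pmod_le f (posPart_nonneg x)).trans
      (mul_le_mul_of_nonneg_left k1 (norm_nonneg f))
  have h4 : pmod f x⁻ ≤ ‖f‖ * ‖x‖ :=
    (pmod_le f (negPart_nonneg x)).trans
      (mul_le_mul_of_nonneg_left k2 (norm_nonneg f))
  have h0 : 0 ≤ ‖f‖ * ‖x‖ := le_trans h1 h3
  rw [Real.norm_eq_abs, mul_assoc, abs_le]
  constructor <;> [skip; skip] <;> unfold modFun <;> linarith

/-- The modulus as a continuous linear functional. -/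
def modDual (f : StrongDual ℝ F) : StrongDual ℝ F :=
  AddMonoidHom.toRealLinearMap (AddMonoidHom.mk' (modFun f) (modFun_add f))
    (AddMonoidHomClass.continuous_of_bound (AddMonoidHom.mk' (modFun f) (modFun_add f))
      (2 * ‖f‖) (fun x => by simpa [mul_assoc] using modFun_bound f x))

theorem modDual_apply (f : StrongDual ℝ F) (x : F) : modDual f x = modFun f x := by
  simp [modDual, AddMonoidHom.coe_toRealLinearMap]

end ModulusAux

namespace ModulusAuxMain

open ModulusAux

theorem isAbsOf_modDual {F : Type*} [NormedAddCommGroup F] [Lattice F] [HasSolidNorm F] [IsOrderedAddMonoid F] [NormedSpace ℝ F]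
    (f : StrongDual ℝ F) : IsAbsOf (modDual f) f := by
  intro x hx
  rw [modDual_apply, modFun_eq f hx (le_refl (0 : F)) (sub_zero x).symm, pmod_zero, sub_zero]
  rfl

end ModulusAuxMain

/-- Domination for d-limited operators: if the lattice operations in `F'` are
sequentially weak*-continuous, `0 ≤ S ≤ T` and `T` is d-limited, then `S` is d-limited. -/
theorem dLimited_of_dominated {E F : Type*}
    [NormedAddCommGroup E] [Lattice E] [HasSolidNorm E] [IsOrderedAddMonoid E] [NormedSpace ℝ E] [CompleteSpace E]
    [NormedAddCommGroup F] [Lattice F] [HasSolidNorm F] [IsOrderedAddMonoid F] [NormedSpace ℝ F] [CompleteSpace F]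
    (hF : ∀ f : ℕ → StrongDual ℝ F, WStarNull f →
      ∀ g : ℕ → StrongDual ℝ F, (∀ n, IsAbsOf (g n) (f n)) → WStarNull g)
    (S T : E →L[ℝ] F)
    (hS : ∀ x : E, 0 ≤ x → 0 ≤ S x)
    (hST : ∀ x : E, 0 ≤ x → S x ≤ T x)
    (hT : ∀ D : Set E, DisjointSet D → IsBounded D → LimitedSet (T '' D)) :
    ∀ D : Set E, DisjointSet D → IsBounded D → LimitedSet (S '' D) := by
  classical
  intro D hD hDb
  constructor
  · exact S.lipschitz.isBounded_image hDb
  · intro f hf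
    set g : ℕ → StrongDual ℝ F := fun n => ModulusAux.modDual (f n) with hgdef
    have hg : ∀ n, IsAbsOf (g n) (f n) := fun n => ModulusAuxMain.isAbsOf_modDual (f n)
    have hgnull : WStarNull g := hF f hf g hg
    set D' : Set E := (fun x => |x|) '' D with hD'def
    have hD' : DisjointSet D' := by
      rintro - ⟨x, hx, rfl⟩ - ⟨y, hy, rfl⟩ hne
      have hxy : x ≠ y := fun h => hne (by rw [h])
      have := hD x hx y hy hxy
      simpa [abs_abs] using this
    have hD'b : IsBounded D' := by
      obtain ⟨C, hC⟩ := isBounded_iff_forall_norm_le.mp hDb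
      refine isBounded_iff_forall_norm_le.mpr ⟨C, ?_⟩
      rintro - ⟨x, hx, rfl⟩
      simpa [norm_abs_eq_norm] using hC x hx
    have hlim := (hT D' hD' hD'b).2 g hgnull
    intro ε hε
    obtain ⟨N, hN⟩ := hlim ε hε
    refine ⟨N, fun n hn y hy => ?_⟩
    obtain ⟨x, hx, rfl⟩ := hy
    have hax : (0 : E) ≤ |x| := abs_nonneg x
    have hT0 : (0 : F) ≤ T |x| := le_trans (hS _ hax) (hST _ hax)
    have hSx : |S x| ≤ T |x| := by
      have h1 : |S x| ≤ S x⁺ + S x⁻ := by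
        calc |S x| = |S x⁺ + -(S x⁻)| := by
              rw [← sub_eq_add_neg, ← map_sub, posPart_sub_negPart]
          _ ≤ |S x⁺| + |(-(S x⁻))| := abs_add_le _ _
          _ = S x⁺ + S x⁻ := by
              rw [abs_neg, abs_of_nonneg (hS _ (posPart_nonneg x)),
                abs_of_nonneg (hS _ (negPart_nonneg x))]
      have h2 : S x⁺ + S x⁻ = S |x| := by rw [← map_add, posPart_add_negPart]
      exact (h1.trans_eq h2).trans (hST _ hax)
    have hTmem : T |x| ∈ T '' D' := ⟨|x|, ⟨x, hx, rfl⟩, rfl⟩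
    have key : |f n (S x)| ≤ g n (T |x|) := by
      have e : g n (T |x|) = sSup ((fun y => f n y) '' {y : F | |y| ≤ T |x|}) :=
        hg n (T |x|) hT0
      rw [e, abs_le']
      constructor
      · exact ModulusAux.le_pmod (f n) hT0 hSx
      · have := ModulusAux.le_pmod (f n) (y := -(S x)) hT0 (by rwa [abs_neg])
        simpa [ModulusAux.pmod] using this
    exact key.trans ((le_abs_self _).trans (hN n hn _ hTmem))
end
end

section
/- Let E, F be Banach lattices and 0 ≤ S ≤ T : E → F, with T a d-Andrews operator. If the lattice operations in F' are sequentially weakly continuous, then S is a d-Andrews operator. -/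
open Filter Topology Bornology

noncomputable section

/-- A sequence `f` in the dual of `Y` is weakly null. -/
def WNull {Y : Type*} [NormedAddCommGroup Y] [NormedSpace ℝ Y]
    (f : ℕ → StrongDual ℝ Y) : Prop :=
  ∀ G : StrongDual ℝ (StrongDual ℝ Y), Tendsto (fun n => G (f n)) atTop (𝓝 0)

/-- A Dunford–Pettis subset of a Banach space. -/
def DPSet {Y : Type*} [NormedAddCommGroup Y] [NormedSpace ℝ Y] (A : Set Y) : Prop :=
  IsBounded A ∧ ∀ f : ℕ → StrongDual ℝ Y, WNull f → UnifNull f A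

namespace DAndrewsAux

variable {F : Type*} [NormedAddCommGroup F] [Lattice F] [HasSolidNorm F] [IsOrderedAddMonoid F] [NormedSpace ℝ F]

lemma labs_le {a b : F} (h1 : -b ≤ a) (h2 : a ≤ b) : |a| ≤ b :=
  abs_le'.2 ⟨h2, neg_le.2 h1⟩

/-- Riesz decomposition. -/
lemma riesz_decomp (x₁ x₂ y : F) (h₁ : 0 ≤ x₁) (h₂ : 0 ≤ x₂) (h : |y| ≤ x₁ + x₂) :
    ∃ y₁ y₂ : F, y = y₁ + y₂ ∧ |y₁| ≤ x₁ ∧ |y₂| ≤ x₂ := by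
  have hyu : y ≤ x₁ + x₂ := (abs_le'.1 h).1
  have hyl : -(x₁ + x₂) ≤ y := neg_le.1 (abs_le'.1 h).2
  set y₁ : F := (y ⊔ -x₁) ⊓ x₁ with hy₁
  refine ⟨y₁, y - y₁, by abel, ?_, ?_⟩
  · exact labs_le (le_inf le_sup_right (neg_le_self h₁)) inf_le_right
  · refine labs_le ?_ ?_
    · -- -x₂ ≤ y - y₁  ⟸  y₁ ≤ y + x₂
      rw [neg_le_sub_iff_le_add]
      have hx1 : -x₁ ≤ y + x₂ := by
        have h' : -x₁ - x₂ ≤ y := by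
          rw [show -x₁ - x₂ = -(x₁ + x₂) by abel]; exact hyl
        exact sub_le_iff_le_add.1 h'
      calc y₁ ≤ y ⊔ -x₁ := inf_le_left
        _ ≤ y + x₂ := sup_le (le_add_of_nonneg_right h₂) hx1
    · -- y - y₁ ≤ x₂  ⟸  y - x₂ ≤ y₁
      rw [sub_le_comm]
      refine le_inf ?_ ?_
      · exact le_trans (sub_le_self y h₂) le_sup_left
      · exact sub_le_iff_le_add.2 hyu

def Q (f : StrongDual ℝ F) (x : F) : ℝ := sSup ((fun y => f y) '' {y : F | |y| ≤ x})

lemma mem_Qset {f : StrongDual ℝ F} {x : F} (hx : 0 ≤ x) :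
    (0 : ℝ) ∈ (fun y => f y) '' {y : F | |y| ≤ x} :=
  ⟨0, by simpa using hx, by simp⟩

lemma Qset_bddAbove (f : StrongDual ℝ F) {x : F} (hx : 0 ≤ x) :
    BddAbove ((fun y => f y) '' {y : F | |y| ≤ x}) := by
  refine ⟨‖f‖ * ‖x‖, ?_⟩
  rintro a ⟨y, hy, rfl⟩
  have hnorm : ‖y‖ ≤ ‖x‖ := by
    refine norm_le_norm_of_abs_le_abs ?_
    rwa [abs_of_nonneg hx]
  calc f y ≤ |f y| := le_abs_self _
    _ = ‖f y‖ := (Real.norm_eq_abs _).symm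
    _ ≤ ‖f‖ * ‖y‖ := f.le_opNorm y
    _ ≤ ‖f‖ * ‖x‖ := by gcongr

lemma le_Q (f : StrongDual ℝ F) {x y : F} (hx : 0 ≤ x) (hy : |y| ≤ x) :
    f y ≤ Q f x :=
  le_csSup (Qset_bddAbove f hx) ⟨y, hy, rfl⟩

lemma Q_nonneg (f : StrongDual ℝ F) {x : F} (hx : 0 ≤ x) : 0 ≤ Q f x :=
  le_csSup (Qset_bddAbove f hx) (mem_Qset hx)

lemma Q_le (f : StrongDual ℝ F) {x : F} (hx : 0 ≤ x) {c : ℝ}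
    (hc : ∀ y : F, |y| ≤ x → f y ≤ c) : Q f x ≤ c := by
  refine csSup_le ⟨0, mem_Qset hx⟩ ?_
  rintro a ⟨y, hy, rfl⟩
  exact hc y hy

lemma Q_norm_le (f : StrongDual ℝ F) {x : F} (hx : 0 ≤ x) : Q f x ≤ ‖f‖ * ‖x‖ := by
  refine Q_le f hx fun y hy => ?_
  have hnorm : ‖y‖ ≤ ‖x‖ := by
    refine norm_le_norm_of_abs_le_abs ?_
    rwa [abs_of_nonneg hx]
  calc f y ≤ ‖f y‖ := le_abs_self _
    _ ≤ ‖f‖ * ‖y‖ := f.le_opNorm y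
    _ ≤ ‖f‖ * ‖x‖ := by gcongr

lemma Q_add (f : StrongDual ℝ F) {x₁ x₂ : F} (h₁ : 0 ≤ x₁) (h₂ : 0 ≤ x₂) :
    Q f (x₁ + x₂) = Q f x₁ + Q f x₂ := by
  have h12 : 0 ≤ x₁ + x₂ := add_nonneg h₁ h₂
  refine le_antisymm ?_ ?_
  · refine Q_le f h12 fun y hy => ?_
    obtain ⟨y₁, y₂, rfl, hy₁, hy₂⟩ := riesz_decomp x₁ x₂ y h₁ h₂ hy
    rw [map_add]
    exact add_le_add (le_Q f h₁ hy₁) (le_Q f h₂ hy₂)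
  · rw [← sub_nonneg, ← sub_sub]
    have h1 : Q f x₁ ≤ Q f (x₁ + x₂) - Q f x₂ := by
      refine Q_le f h₁ fun y₁ hy₁ => ?_
      rw [le_sub_iff_add_le, add_comm]
      have h2 : Q f x₂ ≤ Q f (x₁ + x₂) - f y₁ := by
        refine Q_le f h₂ fun y₂ hy₂ => ?_
        rw [le_sub_iff_add_le, add_comm, ← map_add]
        refine le_Q f h12 ?_
        exact le_trans (abs_add_le y₁ y₂) (add_le_add hy₁ hy₂)
      linarith
    linarith

lemma Q_diff_eq (f : StrongDual ℝ F) {a b c d : F} (ha : 0 ≤ a) (hb : 0 ≤ b)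
    (hc : 0 ≤ c) (hd : 0 ≤ d) (h : a - b = c - d) : Q f a - Q f b = Q f c - Q f d := by
  have habcd : a + d = c + b := sub_eq_sub_iff_add_eq_add.1 h
  have := congrArg (Q f) habcd
  rw [Q_add f ha hd, Q_add f hc hb] at this
  linarith

def absHom (f : StrongDual ℝ F) : F →+ ℝ :=
  AddMonoidHom.mk' (fun x => Q f x⁺ - Q f x⁻) (by
    intro x y
    have h1 : (x + y)⁺ - (x + y)⁻ = (x⁺ + y⁺) - (x⁻ + y⁻) := by
      calc (x + y)⁺ - (x + y)⁻ = x + y := posPart_sub_negPart _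
        _ = (x⁺ - x⁻) + (y⁺ - y⁻) := by
            rw [posPart_sub_negPart, posPart_sub_negPart]
        _ = (x⁺ + y⁺) - (x⁻ + y⁻) := by abel
    have h2 := Q_diff_eq f (posPart_nonneg _) (negPart_nonneg _)
      (add_nonneg (posPart_nonneg x) (posPart_nonneg y))
      (add_nonneg (negPart_nonneg x) (negPart_nonneg y)) h1
    show Q f (x + y)⁺ - Q f (x + y)⁻ = (Q f x⁺ - Q f x⁻) + (Q f y⁺ - Q f y⁻)
    rw [h2, Q_add f (posPart_nonneg x) (posPart_nonneg y),
      Q_add f (negPart_nonneg x) (negPart_nonneg y)]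
    ring)

lemma absHom_bound (f : StrongDual ℝ F) (x : F) :
    ‖absHom f x‖ ≤ (2 * ‖f‖) * ‖x‖ := by
  have hp : ‖x⁺‖ ≤ ‖x‖ := by
    refine norm_le_norm_of_abs_le_abs ?_
    rw [abs_of_nonneg (posPart_nonneg x), ← posPart_add_negPart x]
    exact le_add_of_nonneg_right (negPart_nonneg x)
  have hn : ‖x⁻‖ ≤ ‖x‖ := by
    refine norm_le_norm_of_abs_le_abs ?_
    rw [abs_of_nonneg (negPart_nonneg x), ← posPart_add_negPart x]
    exact le_add_of_nonneg_left (posPart_nonneg x)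
  have b1 := Q_norm_le f (posPart_nonneg x)
  have b2 := Q_norm_le f (negPart_nonneg x)
  have n1 := Q_nonneg f (posPart_nonneg x)
  have n2 := Q_nonneg f (negPart_nonneg x)
  have hf : 0 ≤ ‖f‖ := norm_nonneg _
  have : |Q f x⁺ - Q f x⁻| ≤ ‖f‖ * ‖x‖ + ‖f‖ * ‖x‖ := by
    rw [abs_le]
    constructor
    · nlinarith [mul_le_mul_of_nonneg_left hn hf]
    · nlinarith [mul_le_mul_of_nonneg_left hp hf]
  simpa [absHom, Real.norm_eq_abs, two_mul, mul_assoc, add_mul] using this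

/-- The modulus of a continuous functional on a Banach lattice exists. -/
lemma exists_isAbsOf (f : StrongDual ℝ F) :
    ∃ g : StrongDual ℝ F, IsAbsOf g f ∧ ∀ x : F, 0 ≤ x → 0 ≤ g x := by
  have hcont : Continuous (absHom f) :=
    AddMonoidHomClass.continuous_of_bound (absHom f) (2 * ‖f‖) (absHom_bound f)
  refine ⟨(absHom f).toRealLinearMap hcont, ?_, ?_⟩
  · intro x hx
    have : ((absHom f).toRealLinearMap hcont) x = absHom f x := by
      rw [AddMonoidHom.coe_toRealLinearMap]
    rw [this]
    show Q f x⁺ - Q f x⁻ = _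
    rw [posPart_of_nonneg hx, negPart_of_nonneg hx]
    have : Q f (0 : F) = 0 := by
      refine le_antisymm ?_ (Q_nonneg f le_rfl)
      simpa using Q_norm_le f (le_refl (0 : F))
    rw [this]
    simp [Q]
  · intro x hx
    have : ((absHom f).toRealLinearMap hcont) x = absHom f x := by
      rw [AddMonoidHom.coe_toRealLinearMap]
    rw [this]
    show 0 ≤ Q f x⁺ - Q f x⁻
    rw [posPart_of_nonneg hx, negPart_of_nonneg hx]
    have h0 : Q f (0 : F) = 0 := by
      refine le_antisymm ?_ (Q_nonneg f le_rfl)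
      simpa using Q_norm_le f (le_refl (0 : F))
    rw [h0, sub_zero]
    exact Q_nonneg f hx

end DAndrewsAux

open DAndrewsAux in
/-- Domination for a d-Andrews operator operators: if the lattice operations in `F'` are
sequentially weakly continuous, `0 ≤ S ≤ T` and `T` is a d-Andrews operator, then `S` is a d-Andrews operator. -/
theorem dAndrews_of_dominated {E F : Type*}
    [NormedAddCommGroup E] [Lattice E] [HasSolidNorm E] [IsOrderedAddMonoid E] [NormedSpace ℝ E] [CompleteSpace E]
    [NormedAddCommGroup F] [Lattice F] [HasSolidNorm F] [IsOrderedAddMonoid F] [NormedSpace ℝ F] [CompleteSpace F]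
    (hF : ∀ f : ℕ → StrongDual ℝ F, WNull f →
      ∀ g : ℕ → StrongDual ℝ F, (∀ n, IsAbsOf (g n) (f n)) → WNull g)
    (S T : E →L[ℝ] F)
    (hS : ∀ x : E, 0 ≤ x → 0 ≤ S x)
    (hST : ∀ x : E, 0 ≤ x → S x ≤ T x)
    (hT : ∀ D : Set E, DisjointSet D → IsBounded D → DPSet (T '' D)) :
    ∀ D : Set E, DisjointSet D → IsBounded D → DPSet (S '' D) := by
  intro D hD hDb
  -- the set of moduli
  set D' : Set E := (fun x => |x|) '' D with hD'def
  have hD' : DisjointSet D' := by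
    rintro u ⟨x, hx, rfl⟩ v ⟨y, hy, rfl⟩ huv
    have hxy : x ≠ y := fun h => huv (by rw [h])
    have := hD x hx y hy hxy
    simpa [abs_abs] using this
  have hD'b : IsBounded D' := by
    obtain ⟨C, hC⟩ := isBounded_iff_forall_norm_le.1 hDb
    refine isBounded_iff_forall_norm_le.2 ⟨C, ?_⟩
    rintro u ⟨x, hx, rfl⟩
    rw [norm_abs_eq_norm]
    exact hC x hx
  obtain ⟨hTb, hTdp⟩ := hT D' hD' hD'b
  constructor
  · -- S '' D is bounded
    obtain ⟨C, hC⟩ := isBounded_iff_forall_norm_le.1 hDb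
    refine isBounded_iff_forall_norm_le.2 ⟨‖S‖ * C, ?_⟩
    rintro u ⟨x, hx, rfl⟩
    calc ‖S x‖ ≤ ‖S‖ * ‖x‖ := S.le_opNorm x
      _ ≤ ‖S‖ * C := mul_le_mul_of_nonneg_left (hC x hx) (norm_nonneg S)
  · intro f hf ε hε
    -- choose the moduli of the f n
    choose g hg hgpos using fun n => exists_isAbsOf (f n)
    have hgw : WNull g := hF f hf g hg
    obtain ⟨N, hN⟩ := hTdp g hgw ε hε
    refine ⟨N, fun n hn u hu => ?_⟩
    obtain ⟨x, hx, rfl⟩ := hu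
    -- key estimates
    have habsx : (0 : E) ≤ |x| := abs_nonneg x
    have hT0 : 0 ≤ T |x| := le_trans (hS _ habsx) (hST _ habsx)
    have hSx : |S x| ≤ T |x| := by
      have h1 : S x = S x⁺ - S x⁻ := by
        rw [← map_sub, posPart_sub_negPart]
      have h2 : |S x| ≤ S x⁺ + S x⁻ := by
        rw [h1, sub_eq_add_neg]
        refine le_trans (abs_add_le _ _) ?_
        rw [abs_of_nonneg (hS _ (posPart_nonneg x)), abs_neg,
          abs_of_nonneg (hS _ (negPart_nonneg x))]
      have h3 : S x⁺ + S x⁻ = S |x| := by rw [← map_add, posPart_add_negPart]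
      calc |S x| ≤ S x⁺ + S x⁻ := h2
        _ = S |x| := h3
        _ ≤ T |x| := hST _ habsx
    have hmem : T |x| ∈ T '' D' := ⟨|x|, ⟨x, hx, rfl⟩, rfl⟩
    have hbound := hN n hn (T |x|) hmem
    -- |f n (S x)| ≤ g n (T |x|)
    have hgval : g n (T |x|) = sSup ((fun y => f n y) '' {y : F | |y| ≤ T |x|}) :=
      hg n (T |x|) hT0
    have hbdd : BddAbove ((fun y => (f n) y) '' {y : F | |y| ≤ T |x|}) :=
      Qset_bddAbove (f n) hT0
    have h1 : f n (S x) ≤ g n (T |x|) := by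
      rw [hgval]
      exact le_csSup hbdd ⟨S x, hSx, rfl⟩
    have h2 : -(f n (S x)) ≤ g n (T |x|) := by
      rw [hgval, ← map_neg]
      refine le_csSup hbdd ⟨-(S x), by simpa using hSx, rfl⟩
    have h3 : |f n (S x)| ≤ g n (T |x|) := abs_le.2 ⟨by linarith, h1⟩
    have h4 : g n (T |x|) ≤ |g n (T |x|)| := le_abs_self _
    linarith [hbound]
end
end
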